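/- arXiv:2601.02685 — 10 statements merged into one kernel-verified Lean document; each statement's English description precedes it below -/
import Mathlib

section
/- Let F be a rooted directed forest on n ≥ 1 vertices and k ≥ 2 a natural number. Then every branching k-path vertex cover P of F satisfies |P| ≥ (n + k) / (2k). -/
/-- A rooted directed forest on vertex type `V`, given by a parent map
(edges are oriented from parent to child, i.e. away from the roots),
with no directed cycles. A root is a vertex with no parent. -/
structure RDForest (V : Type) where
  parent : V → Option V
  acyclic : ∀ v : V, ¬ Relation.TransGen (fun a b => parent b = some a) v v

namespace RDForest

variable {V : Type}

/-- Out-degree of a vertex: its number of children. -/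
noncomputable def outDeg (F : RDForest V) (v : V) : ℕ :=
  Nat.card {w | F.parent w = some v}

/-- A leaf is a vertex of out-degree 0. -/
def IsLeaf (F : RDForest V) (v : V) : Prop := F.outDeg v = 0

/-- A branching vertex is a vertex of out-degree at least 2. -/
def IsBranching (F : RDForest V) (v : V) : Prop := 2 ≤ F.outDeg v

/-- `p 0, p 1, …, p (k-1)` is a directed path on `k` vertices
(each successive vertex is a child of the previous one). -/
def IsDPath (F : RDForest V) (k : ℕ) (p : ℕ → V) : Prop :=
  ∀ i, i + 1 < k → F.parent (p (i + 1)) = some (p i)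

/-- A branching `k`-path vertex cover of a rooted directed forest:
all leaves belong to `P`, and every directed path on `k` vertices contains
a branching vertex or a vertex of `P`. -/
def IsBPVC (F : RDForest V) (k : ℕ) (P : Set V) : Prop :=
  (∀ v, F.IsLeaf v → v ∈ P) ∧
  ∀ p : ℕ → V, F.IsDPath k p →
    (∃ i < k, F.IsBranching (p i)) ∨ (∃ i < k, p i ∈ P)

end RDForest

/-- Lower bound for the directed case: every branching `k`-path vertex cover of a
rooted directed forest on `n ≥ 1` vertices has at least `(n + k)/(2k)` vertices. -/
theorem stmt0 {V : Type} [Fintype V] (F : RDForest V) (k : ℕ)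
    (hn : 1 ≤ Nat.card V) (hk : 2 ≤ k) (P : Set V) (hP : F.IsBPVC k P) :
    ((Nat.card V : ℚ) + k) / (2 * k) ≤ P.ncard := by
  classical
  haveI : Nonempty V := by
    rw [Nat.card_eq_fintype_card] at hn
    exact Fintype.card_pos_iff.mp hn
  set B : Set V := {v | F.IsBranching v} with hB
  set M : Set V := P ∪ B with hM
  -- every vertex not in M has a child
  have hnotM : ∀ v, v ∉ M → ∃ w, F.parent w = some v := by
    intro v hv
    have hnp : v ∉ P := fun h => hv (Or.inl h)
    have hleaf : ¬ F.IsLeaf v := fun h => hnp (hP.1 v h)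
    have : Nat.card {w | F.parent w = some v} ≠ 0 := hleaf
    have hne : Nonempty {w | F.parent w = some v} := (Nat.card_ne_zero.mp this).1
    obtain ⟨⟨w, hw⟩⟩ := hne
    exact ⟨w, hw⟩
  let child : V → V := fun v => if h : ∃ w, F.parent w = some v then h.choose else v
  have hchild : ∀ v, v ∉ M → F.parent (child v) = some v := by
    intro v hv
    have h := hnotM v hv
    simp only [child, dif_pos h]
    exact h.choose_spec
  let step : V → V := fun v => if v ∈ M then v else child v
  have hstep_not : ∀ v, v ∉ M → step v = child v := by
    intro v hv; simp only [step, if_neg hv]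
  -- every vertex reaches M within k steps
  have hex : ∀ v, ∃ n, step^[n] v ∈ M := by
    intro v
    by_contra h
    push_neg at h
    have hpath : F.IsDPath k (fun i => step^[i] v) := by
      intro i hi
      have hm : step^[i] v ∉ M := h i
      show F.parent (step^[i+1] v) = some (step^[i] v)
      rw [Function.iterate_succ_apply', hstep_not _ hm]
      exact hchild _ hm
    rcases hP.2 _ hpath with ⟨i, _, hbr⟩ | ⟨i, _, hp⟩
    · exact h i (Or.inr hbr)
    · exact h i (Or.inl hp)
  have hexk : ∀ v, ∃ n < k, step^[n] v ∈ M := by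
    intro v
    by_contra h
    push_neg at h
    have hpath : F.IsDPath k (fun i => step^[i] v) := by
      intro i hi
      have hm : step^[i] v ∉ M := h i (lt_of_le_of_lt (Nat.le_succ i) hi)
      show F.parent (step^[i+1] v) = some (step^[i] v)
      rw [Function.iterate_succ_apply', hstep_not _ hm]
      exact hchild _ hm
    rcases hP.2 _ hpath with ⟨i, hik, hbr⟩ | ⟨i, hik, hp⟩
    · exact h i hik (Or.inr hbr)
    · exact h i hik (Or.inl hp)
  let d : V → ℕ := fun v => Nat.find (hex v)
  have hdmem : ∀ v, step^[d v] v ∈ M := fun v => Nat.find_spec (hex v)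
  have hdk : ∀ v, d v < k := by
    intro v
    obtain ⟨n, hnk, hnm⟩ := hexk v
    exact lt_of_le_of_lt (Nat.find_le hnm) hnk
  have hdmin : ∀ v, ∀ i, i < d v → step^[i] v ∉ M := fun v i hi => Nat.find_min (hex v) hi
  -- recovery: v is determined by (step^[d v] v, d v)
  let g : Option V → Option V := fun o => o.bind F.parent
  have hrec : ∀ n, ∀ v : V, (∀ i, i < n → step^[i] v ∉ M) →
      g^[n] (some (step^[n] v)) = some v := by
    intro n
    induction n with
    | zero => intro v _; simp
    | succ n ih =>
      intro v hv
      have hm : step^[n] v ∉ M := hv n (Nat.lt_succ_self n)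
      have h1 : step^[n+1] v = child (step^[n] v) := by
        rw [Function.iterate_succ_apply', hstep_not _ hm]
      have h2 : g (some (step^[n+1] v)) = some (step^[n] v) := by
        simp only [g, Option.bind_some, h1]
        exact hchild _ hm
      rw [Function.iterate_succ_apply, h2]
      exact ih v (fun i hi => hv i (Nat.lt_succ_of_lt hi))
  -- injection into M × Fin k
  have hMfin : M.Finite := Set.toFinite M
  let φ : V → M × Fin k := fun v => (⟨step^[d v] v, hdmem v⟩, ⟨d v, hdk v⟩)
  have hinj : Function.Injective φ := by
    intro v v' h
    have hd : d v = d v' := by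
      have := congrArg (fun x => (x.2 : ℕ)) h
      simpa using this
    have hs : step^[d v] v = step^[d v'] v' := by
      have := congrArg (fun x => (x.1 : V)) h
      simpa using this
    have e1 := hrec (d v) v (hdmin v)
    have e2 := hrec (d v') v' (hdmin v')
    rw [hs, hd] at e1
    exact (Option.some_injective V (e2.symm.trans e1)).symm
  have hcard1 : Nat.card V ≤ M.ncard * k := by
    have := Nat.card_le_card_of_injective φ hinj
    rwa [Nat.card_prod, Nat.card_eq_fintype_card (α := Fin k), Fintype.card_fin,
      Nat.card_coe_set_eq] at this
  -- degree counting: #leaves ≥ #branching + #roots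
  let Lf : Finset V := Finset.univ.filter (fun v => F.outDeg v = 0)
  let Bf : Finset V := Finset.univ.filter (fun v => 2 ≤ F.outDeg v)
  let roots : Finset V := Finset.univ.filter (fun v => F.parent v = none)
  let edges : Finset V := Finset.univ.filter (fun v => ¬ F.parent v = none)
  have hsplit : roots.card + edges.card = Fintype.card V := by
    simpa using Finset.card_filter_add_card_filter_not
      (s := Finset.univ) (p := fun v => F.parent v = none)
  have hdeg : ∀ v, F.outDeg v = (Finset.univ.filter (fun w => F.parent w = some v)).card := by
    intro v
    rw [RDForest.outDeg, Nat.card_eq_fintype_card]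
    simp [Fintype.card_subtype]
  have hsum : ∑ v : V, F.outDeg v = edges.card := by
    have := Finset.card_eq_sum_card_fiberwise
      (s := edges) (t := Finset.univ) (f := fun w => (F.parent w).getD w)
      (fun x _ => Finset.mem_univ _)
    rw [this]
    refine Finset.sum_congr rfl (fun v _ => ?_)
    rw [hdeg v]
    congr 1
    ext w
    simp only [edges, Finset.mem_filter, Finset.mem_univ, true_and]
    cases hw : F.parent w with
    | none => simp [hw]
    | some u => simp [hw]
  have hdegsum : Fintype.card V + Bf.card ≤ Lf.card + edges.card := by
    have h1 : ∀ v : V, 1 + (if 2 ≤ F.outDeg v then 1 else 0) ≤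
        (if F.outDeg v = 0 then 1 else 0) + F.outDeg v := by
      intro v
      by_cases h0 : F.outDeg v = 0
      · simp [h0]
      · by_cases h2 : 2 ≤ F.outDeg v
        · simp only [if_neg h0, if_pos h2]; omega
        · simp only [if_neg h0, if_neg h2]; omega
    calc Fintype.card V + Bf.card
        = ∑ v : V, (1 + (if 2 ≤ F.outDeg v then 1 else 0)) := by
          rw [Finset.sum_add_distrib, Finset.sum_const, Finset.card_univ, smul_eq_mul,
            mul_one, Finset.sum_boole]
          simp [Bf]
      _ ≤ ∑ v : V, ((if F.outDeg v = 0 then 1 else 0) + F.outDeg v) :=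
          Finset.sum_le_sum (fun v _ => h1 v)
      _ = Lf.card + edges.card := by
          rw [Finset.sum_add_distrib, Finset.sum_boole, hsum]
          simp [Lf]
  have hroot : 1 ≤ roots.card := by
    haveI : IsTrans V (Relation.TransGen (fun a b => F.parent b = some a)) :=
      ⟨fun _ _ _ h1 h2 => h1.trans h2⟩
    haveI : IsIrrefl V (Relation.TransGen (fun a b => F.parent b = some a)) :=
      ⟨F.acyclic⟩
    have wf : WellFounded (Relation.TransGen (fun a b => F.parent b = some a)) :=
      Finite.wellFounded_of_trans_of_irrefl _
    have wfr : WellFounded (fun a b : V => F.parent b = some a) :=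
      Subrelation.wf (r := Relation.TransGen (fun a b : V => F.parent b = some a))
        (fun {a b} h => Relation.TransGen.single h) wf
    obtain ⟨m, _, hm⟩ := wfr.has_min Set.univ (Set.univ_nonempty)
    have hmroot : F.parent m = none := by
      cases hpm : F.parent m with
      | none => rfl
      | some a => exact absurd hpm (hm a trivial)
    rw [Nat.one_le_iff_ne_zero, ← Nat.pos_iff_ne_zero, Finset.card_pos]
    exact ⟨m, by simp [roots, hmroot]⟩
  have hbl : Bf.card + roots.card ≤ Lf.card := by omega
  -- leaves ⊆ P
  have hLP : Lf.card ≤ P.ncard := by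
    have hsub : (Lf : Finset V) ⊆ P.toFinset := by
      intro v hv
      simp only [Lf, Finset.mem_filter] at hv
      exact Set.mem_toFinset.mpr (hP.1 v hv.2)
    calc Lf.card ≤ P.toFinset.card := Finset.card_le_card hsub
      _ = P.ncard := by rw [Set.ncard_eq_toFinset_card']
  have hBB : B.ncard = Bf.card := by
    rw [Set.ncard_eq_toFinset_card']
    congr 1
    ext v
    simp [Bf, hB, RDForest.IsBranching]
  -- assemble
  have hMle : M.ncard ≤ P.ncard + B.ncard := Set.ncard_union_le P B
  have hfinal : Nat.card V + k ≤ 2 * P.ncard * k := by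
    have h2 : B.ncard + 1 ≤ P.ncard := by omega
    have h3 : M.ncard + 1 ≤ 2 * P.ncard := by omega
    calc Nat.card V + k ≤ M.ncard * k + k := by omega
      _ = (M.ncard + 1) * k := by ring
      _ ≤ 2 * P.ncard * k := Nat.mul_le_mul_right k h3
  have hkpos : (0:ℚ) < 2 * k := by
    have : (0:ℚ) < k := by exact_mod_cast Nat.lt_of_lt_of_le Nat.zero_lt_two hk
    linarith
  rw [div_le_iff₀ hkpos]
  have : ((Nat.card V : ℚ) + k) ≤ (2 * P.ncard * k : ℕ) := by exact_mod_cast hfinal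
  push_cast at this ⊢
  linarith
end

section
/- For every k ≥ 2 and every i ≥ 1 there exists a rooted directed forest F on n = k(2i−1) vertices admitting a branching k-path vertex cover of size exactly i = (n + k)/(2k); hence the lower bound (n+k)/(2k) for the branching k-path vertex cover number of rooted directed forests is tight. -/
def fseg (i s : ℕ) : ℕ := if s + 2 ≤ i then s - 1 else min (s - (i - 1)) (i - 2)

lemma fseg_lt {i s : ℕ} (hs : 1 ≤ s) : fseg i s < s := by
  unfold fseg; split <;> omega

def par (k i : ℕ) (v : Fin (2 * i - 1) × Fin k) : Option (Fin (2 * i - 1) × Fin k) :=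
  if v.2.val = 0 then
    if v.1.val = 0 then none
    else some (⟨fseg i v.1.val, by have := v.1.isLt; unfold fseg; split <;> omega⟩,
               ⟨k - 1, by have := v.2.isLt; omega⟩)
  else some (v.1, ⟨v.2.val - 1, by have := v.2.isLt; omega⟩)

lemma par_cases {k i : ℕ} {x y : Fin (2 * i - 1) × Fin k} (h : par k i x = some y) :
    (x.2.val = 0 ∧ 1 ≤ x.1.val ∧ y.1.val = fseg i x.1.val ∧ y.2.val = k - 1) ∨
    (1 ≤ x.2.val ∧ y.1.val = x.1.val ∧ y.2.val = x.2.val - 1) := by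
  by_cases h1 : x.2.val = 0 <;> by_cases h2 : x.1.val = 0 <;>
    simp [par, h1, h2, Prod.ext_iff, Fin.ext_iff] at h
  · left; omega
  · right; omega
  · right; omega

lemma par_lt {k i : ℕ} {x y : Fin (2 * i - 1) × Fin k} (h : par k i x = some y) :
    y.1.val * k + y.2.val < x.1.val * k + x.2.val := by
  rcases par_cases h with ⟨h1, h2, h3, h4⟩ | ⟨h1, h2, h3⟩
  · have hf : y.1.val < x.1.val := by
      rw [h3]; exact fseg_lt h2
    have hle : (y.1.val + 1) * k ≤ x.1.val * k := Nat.mul_le_mul_right _ (by omega)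
    have step : y.1.val * k + y.2.val < (y.1.val + 1) * k := by
      rw [add_one_mul]; exact Nat.add_lt_add_left y.2.isLt _
    exact lt_of_lt_of_le step (le_trans hle (Nat.le_add_right _ _))
  · rw [h2]; exact Nat.add_lt_add_left (by omega) _

lemma par_snd {k i : ℕ} {x y : Fin (2 * i - 1) × Fin k} (h : par k i x = some y) :
    y.2.val = k - 1 ∨ x.2.val = y.2.val + 1 := by
  rcases par_cases h with ⟨_, _, _, h4⟩ | ⟨h1, _, h3⟩
  · left; exact h4
  · right; omega

lemma par_eq_top {k i : ℕ} {c v : Fin (2 * i - 1) × Fin k} (h0 : c.2.val = 0)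
    (h1 : 1 ≤ c.1.val) (h2 : fseg i c.1.val = v.1.val) (h3 : v.2.val = k - 1) :
    par k i c = some v := by
  have h1' : ¬ c.1.val = 0 := by omega
  simp only [par, if_pos h0, if_neg h1', Option.some.injEq, Prod.ext_iff, Fin.ext_iff]
  exact ⟨h2, h3.symm⟩

lemma par_eq_step {k i : ℕ} {c v : Fin (2 * i - 1) × Fin k} (h0 : c.1 = v.1)
    (h1 : c.2.val = v.2.val + 1) : par k i c = some v := by
  have h0' : ¬ c.2.val = 0 := by omega
  simp only [par, if_neg h0', Option.some.injEq, Prod.ext_iff, Fin.ext_iff]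
  exact ⟨congrArg Fin.val h0, by omega⟩

def gfun (k i : ℕ) (hk : 0 < k) : Fin i → Fin (2 * i - 1) × Fin k :=
  fun t => (⟨i - 1 + t.val, by have := t.isLt; omega⟩, ⟨k - 1, by omega⟩)

/-- Tightness of the directed lower bound: for every `k ≥ 2` and `i ≥ 1` there is a
rooted directed forest on `n = k(2i-1)` vertices with a branching `k`-path vertex
cover of size `i = (n+k)/(2k)`. -/
theorem stmt1 (k i : ℕ) (hk : 2 ≤ k) (hi : 1 ≤ i) :
    ∃ (V : Type) (_ : Fintype V) (F : RDForest V) (P : Set V),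
      Nat.card V = k * (2 * i - 1) ∧ F.IsBPVC k P ∧ P.ncard = i := by
  classical
  have hk0 : 0 < k := by omega
  set g : Fin i → Fin (2 * i - 1) × Fin k := gfun k i hk0 with hgdef
  have hmem : ∀ v : Fin (2 * i - 1) × Fin k,
      v ∈ Set.range g ↔ (v.2.val = k - 1 ∧ i - 1 ≤ v.1.val) := by
    intro v
    constructor
    · rintro ⟨t, rfl⟩
      refine ⟨rfl, by simp [hgdef, gfun]⟩
    · rintro ⟨h1, h2⟩
      refine ⟨⟨v.1.val - (i - 1), by have := v.1.isLt; omega⟩, ?_⟩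
      exact Prod.ext_iff.mpr ⟨Fin.ext (by simp [hgdef, gfun]; omega),
        Fin.ext (by simp [hgdef, gfun]; omega)⟩
  have hacyc : ∀ v : Fin (2 * i - 1) × Fin k,
      ¬ Relation.TransGen (fun a b => par k i b = some a) v v := by
    intro v hv
    have mono : ∀ a b : Fin (2 * i - 1) × Fin k,
        Relation.TransGen (fun a b => par k i b = some a) a b →
        a.1.val * k + a.2.val < b.1.val * k + b.2.val := by
      intro a b h
      induction h with
      | single h => exact par_lt h
      | tail _ h ih => exact ih.trans (par_lt h)
    exact absurd (mono v v hv) (lt_irrefl _)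
  refine ⟨Fin (2 * i - 1) × Fin k, inferInstance, ⟨par k i, hacyc⟩, Set.range g,
    ?_, ⟨?_, ?_⟩, ?_⟩
  · simp [Nat.card_eq_fintype_card]; ring
  · -- leaves are in P
    intro v hv
    by_contra hvP
    have hx : ¬ (v.2.val = k - 1 ∧ i - 1 ≤ v.1.val) := fun hc => hvP ((hmem v).mpr hc)
    have hc : ∃ c, par k i c = some v := by
      by_cases h2 : v.2.val = k - 1
      · have hu : v.1.val < i - 1 := by
          by_contra hcc; exact hx ⟨h2, by omega⟩
        have hi2 : 2 ≤ i := by omega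
        refine ⟨(⟨v.1.val + i - 1, by have := v.1.isLt; omega⟩, ⟨0, by omega⟩), ?_⟩
        exact par_eq_top rfl (by simp; omega) (by simp only; unfold fseg; split <;> omega) h2
      · refine ⟨(v.1, ⟨v.2.val + 1, by have := v.2.isLt; omega⟩), par_eq_step rfl rfl⟩
    obtain ⟨c, hc⟩ := hc
    have hne : Nat.card {w | par k i w = some v} ≠ 0 := by
      rw [Nat.card_ne_zero]
      exact ⟨⟨c, hc⟩, inferInstance⟩
    exact hne hv
  · -- path condition
    intro p hp
    have hclimb : ∃ m, m < k ∧ (p m).2.val = k - 1 := by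
      by_contra hcon
      push_neg at hcon
      have key : ∀ m, m < k → (p m).2.val = (p 0).2.val + m := by
        intro m
        induction m with
        | zero => intro _; simp
        | succ n ih =>
          intro hm
          have hn := ih (by omega)
          have hpar := hp n (by omega)
          rcases par_snd hpar with h1 | h2
          · exact absurd h1 (hcon n (by omega))
          · omega
      have h1 := key (k - 1) (by omega)
      have h2 := (p (k - 1)).2.isLt
      have h3 := hcon (k - 1) (by omega)
      omega
    obtain ⟨m, hm, hm2⟩ := hclimb
    by_cases hcase : i - 1 ≤ (p m).1.val
    · right; exact ⟨m, hm, (hmem _).mpr ⟨hm2, hcase⟩⟩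
    · left
      refine ⟨m, hm, ?_⟩
      have hu : (p m).1.val < i - 1 := by omega
      have hi2 : 2 ≤ i := by omega
      have hplt := (p m).1.isLt
      set c1 : Fin (2 * i - 1) × Fin k :=
        (⟨(p m).1.val + i - 1, by omega⟩, ⟨0, by omega⟩) with hc1def
      set c2v : ℕ := if (p m).1.val + 3 ≤ i then (p m).1.val + 1 else 2 * i - 2 with hc2vdef
      have hc2v : c2v < 2 * i - 1 ∧ 1 ≤ c2v ∧ fseg i c2v = (p m).1.val := by
        rw [hc2vdef]; unfold fseg; split_ifs <;> omega
      set c2 : Fin (2 * i - 1) × Fin k := (⟨c2v, hc2v.1⟩, ⟨0, by omega⟩) with hc2def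
      have h1 : par k i c1 = some (p m) :=
        par_eq_top rfl (by simp [hc1def]; omega)
          (by simp only [hc1def]; unfold fseg; split <;> omega) hm2
      have h2 : par k i c2 = some (p m) :=
        par_eq_top rfl hc2v.2.1 hc2v.2.2 hm2
      have hne : c1 ≠ c2 := by
        intro hE
        have hE1 := congrArg (fun x => x.1.val) hE
        simp [hc1def, hc2def] at hE1
        rw [hc2vdef] at hE1
        split_ifs at hE1 <;> omega
      have h2le : 2 ≤ Nat.card {w | par k i w = some (p m)} := by
        rw [Nat.card_coe_set_eq]
        refine (Set.one_lt_ncard_iff (Set.toFinite _)).mpr ?_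
        exact ⟨c1, c2, h1, h2, hne⟩
      exact h2le
  · -- P.ncard = i
    have hginj : Function.Injective g := by
      intro a b hab
      have h1 := congrArg (fun x => x.1.val) hab
      simp [hgdef, gfun] at h1
      exact Fin.ext h1
    rw [← Nat.card_coe_set_eq, Nat.card_range_of_injective hginj,
      Nat.card_eq_fintype_card, Fintype.card_fin]
end

section
/- Let F be an undirected forest on n ≥ 2 vertices and k ≥ 2 a natural number. Then every branching k-path vertex cover P of F satisfies |P| ≥ (n + 3k − 1) / (2k). -/
namespace SimpleGraph

variable {V : Type}

/-- Degree of a vertex in an undirected graph. -/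
noncomputable def udeg (G : SimpleGraph V) (v : V) : ℕ := Nat.card {w | G.Adj v w}

/-- `p 0, …, p (k-1)` is a path on `k` vertices: consecutive vertices
are adjacent and all `k` vertices are distinct. -/
def IsUPath (G : SimpleGraph V) (k : ℕ) (p : ℕ → V) : Prop :=
  (∀ i, i + 1 < k → G.Adj (p i) (p (i + 1))) ∧
  (∀ i j, i < k → j < k → p i = p j → i = j)

/-- A branching `k`-path vertex cover of an undirected graph: all vertices of
degree at most 1 belong to `P`, and every path on `k` vertices contains a vertex
of degree at least 3 (a branching vertex) or a vertex of `P`. -/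
def IsBPVC (G : SimpleGraph V) (k : ℕ) (P : Set V) : Prop :=
  (∀ v, G.udeg v ≤ 1 → v ∈ P) ∧
  ∀ p : ℕ → V, G.IsUPath k p →
    (∃ i < k, 3 ≤ G.udeg (p i)) ∨ (∃ i < k, p i ∈ P)

end SimpleGraph

/-!
Call the degree-two vertices outside `P` thread vertices. A component of the subforest they induce
has maximum degree two, hence is a path; it avoids `P` and branching vertices, so it has fewer than
`k` vertices, and at least two forest edges enter it from outside (one at each end, or two into a
single vertex). Counting the entering edges at their outer ends gives `2 · #threads ≤ (k - 1) · s`,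
where `s` is the degree sum over the non-thread vertices. Together with the forest bound
`∑ deg + 2 ≤ 2 · #(non-isolated vertices)` and the fact that non-thread vertices of degree at most
two lie in `P`, a weighted count of the non-thread vertices yields `n + 3k - 1 ≤ 2k |P|`.
-/

open Finset

namespace SimpleGraph

variable {V : Type} {G : SimpleGraph V}

lemma udeg_eq_degree [Fintype V] [DecidableRel G.Adj] (v : V) : G.udeg v = G.degree v := by
  rw [udeg, ← card_neighborSet_eq_degree, Nat.card_eq_fintype_card]
  rfl

lemma IsAcyclic.card_edgeFinset_add_one_le [Fintype V] [Nonempty V] [DecidableRel G.Adj]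
    (hG : G.IsAcyclic) : #G.edgeFinset + 1 ≤ Fintype.card V := by
  classical
  obtain ⟨F, hGF, -, hF⟩ := connected_top.exists_isTree_le_of_le_of_isAcyclic le_top hG
  rw [← hF.card_edgeFinset]
  gcongr

lemma IsAcyclic.sum_degrees_add_two_le [Fintype V] [DecidableRel G.Adj] (hG : G.IsAcyclic)
    {a b : V} (hab : G.Adj a b) : ∑ v, G.degree v + 2 ≤ 2 * #{v | G.degree v ≠ 0} := by
  classical
  have : Nonempty G.support := ⟨⟨a, b, hab⟩⟩
  have hsupp := (hG.induce G.support).card_edgeFinset_add_one_le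
  rw [card_edgeFinset_induce_support] at hsupp
  have hcard : Fintype.card G.support = #{v | G.degree v ≠ 0} := by
    rw [← Set.toFinset_card]
    congr 1
    ext v
    simp [mem_support, ← card_neighborFinset_eq_degree, Finset.card_eq_zero,
      Finset.eq_empty_iff_forall_notMem]
  rw [sum_degrees_eq_twice_card_edges]
  omega

lemma three_le_degree [Fintype V] [DecidableRel G.Adj] {v a b c : V} (ha : G.Adj v a)
    (hb : G.Adj v b) (hc : G.Adj v c) (hab : a ≠ b) (hac : a ≠ c) (hbc : b ≠ c) :
    3 ≤ G.degree v := by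
  classical
  rw [← card_neighborFinset_eq_degree]
  calc 3 = #{a, b, c} := by rw [card_insert_of_notMem (by simp [hab, hac]),
        card_pair hbc]
    _ ≤ _ := card_le_card (by simp [insert_subset_iff, ha, hb, hc])

lemma exists_adj_adj_of_degree_eq_two [Fintype V] [DecidableRel G.Adj] {v : V}
    (h : G.degree v = 2) :
    ∃ x y, x ≠ y ∧ G.Adj v x ∧ G.Adj v y := by
  classical
  obtain ⟨x, y, hxy, hN⟩ := Finset.card_eq_two.1 ((card_neighborFinset_eq_degree G v).trans h)
  exact ⟨x, y, hxy, by simp [← mem_neighborFinset, hN], by simp [← mem_neighborFinset, hN]⟩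

lemma Walk.IsPath.exists_isPath_length_succ [Fintype V] [DecidableRel G.Adj]
    (hdeg : ∀ v, G.degree v ≤ 2) {u v : V} {p : G.Walk u v} (hp : p.IsPath) {a b : V}
    (hab : G.Adj a b) (ha : a ∈ p.support) (hb : b ∉ p.support) :
    ∃ (u' v' : V) (q : G.Walk u' v'), q.IsPath ∧ q.length = p.length + 1 ∧
      ∀ y ∈ q.support, y = b ∨ y ∈ p.support := by
  obtain ⟨i, rfl, hi⟩ := Walk.mem_support_iff_exists_getVert.1 ha
  rcases Nat.eq_zero_or_pos i with rfl | hi0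
  · rw [Walk.getVert_zero] at hab
    exact ⟨b, v, .cons hab.symm p, hp.cons hb, by simp, by simp⟩
  rcases hi.eq_or_lt with rfl | hil
  · rw [Walk.getVert_length] at hab
    exact ⟨b, u, .cons hab.symm p.reverse, hp.reverse.cons (by simpa using hb), by simp,
      by simp⟩
  exfalso
  have hprev : G.Adj (p.getVert i) (p.getVert (i - 1)) := by
    simpa [Nat.sub_add_cancel hi0] using (p.adj_getVert_succ (i := i - 1) (by omega)).symm
  have hne : p.getVert (i - 1) ≠ p.getVert (i + 1) := fun h => by
    have := hp.getVert_injOn (by simp; omega) (by simp; omega) h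
    omega
  have hnb : ∀ j, p.getVert j ≠ b := fun j h => hb (h ▸ p.getVert_mem_support j)
  have := three_le_degree hprev (p.adj_getVert_succ hil) hab hne (hnb _) (hnb _)
  have := hdeg (p.getVert i)
  omega

lemma exists_isPath_forall_mem_support_iff_reachable [Fintype V] [DecidableRel G.Adj]
    (hdeg : ∀ v, G.degree v ≤ 2) (x : V) :
    ∃ (u v : V) (p : G.Walk u v), p.IsPath ∧ ∀ y, y ∈ p.support ↔ G.Reachable x y := by
  classical
  -- A longest path inside the component of `x` cannot be extended, so it covers the component.
  let Q : ℕ → Prop := fun m => ∃ (u v : V) (p : G.Walk u v), p.IsPath ∧ p.length = m ∧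
    ∀ y ∈ p.support, G.Reachable x y
  have hQ0 : Q 0 := ⟨x, x, .nil, .nil, rfl, by simp⟩
  obtain ⟨u, v, p, hp, hlen, hreach⟩ := Nat.findGreatest_spec (Nat.zero_le (Fintype.card V)) hQ0
  refine ⟨u, v, p, hp, fun y => ⟨hreach y, fun hy => ?_⟩⟩
  by_contra hyp
  obtain ⟨w⟩ := (hreach u p.start_mem_support).symm.trans hy
  obtain ⟨d, -, hd1, hd2⟩ := w.exists_boundary_dart {z | z ∈ p.support} p.start_mem_support hyp
  obtain ⟨u', v', q, hq, hqlen, hqsupp⟩ := hp.exists_isPath_length_succ hdeg d.adj hd1 hd2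
  refine Nat.findGreatest_is_greatest (P := Q) (Nat.lt_succ_self _) ?_
    ⟨u', v', q, hq, hlen ▸ hqlen, fun z hz => ?_⟩
  · have := hq.length_lt
    omega
  · rcases hqsupp z hz with rfl | hz
    · exact (hreach _ hd1).trans d.adj.reachable
    · exact hreach z hz

def spanningInduce (G : SimpleGraph V) (T : Set V) : SimpleGraph V :=
  ((⊤ : G.Subgraph).induce T).spanningCoe

section spanningInduce

variable {T : Set V} {a b : V}

@[simp]
lemma spanningInduce_adj : (G.spanningInduce T).Adj a b ↔ G.Adj a b ∧ a ∈ T ∧ b ∈ T := by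
  simp [spanningInduce]
  tauto

lemma spanningInduce_le : G.spanningInduce T ≤ G :=
  Subgraph.spanningCoe_le _

lemma Reachable.mem_of_spanningInduce (h : (G.spanningInduce T).Reachable a b) (ha : a ∈ T) :
    b ∈ T := by
  by_contra hb
  obtain ⟨w⟩ := h
  obtain ⟨d, -, -, hd⟩ := w.exists_boundary_dart T ha hb
  exact hd (spanningInduce_adj.1 d.adj).2.2

lemma degree_spanningInduce_le_two [Fintype V] [DecidableRel G.Adj]
    [DecidableRel (G.spanningInduce T).Adj] (hT : ∀ v ∈ T, G.degree v = 2) (v : V) :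
    (G.spanningInduce T).degree v ≤ 2 := by
  by_cases hv : v ∈ T
  · exact hT v hv ▸ degree_le_of_le spanningInduce_le
  · rw [← card_neighborFinset_eq_degree, Finset.card_eq_zero.2]
    · omega
    · ext w
      simp [hv]

end spanningInduce

lemma IsAcyclic.eq_snd_of_adj_of_spanningInduce (hG : G.IsAcyclic) {T : Set V} {u v w : V}
    {p : (G.spanningInduce T).Walk u v} (hp : p.IsPath)
    (hcover : ∀ y, (G.spanningInduce T).Reachable u y → y ∈ p.support) (hu : u ∈ T)
    (huw : G.Adj u w) (hw : w ∈ T) : w = p.snd := by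
  have hadj : (G.spanningInduce T).Adj u w := spanningInduce_adj.2 ⟨huw, hu, hw⟩
  exact (hG.anti spanningInduce_le).eq_snd_of_adj_start hp hadj (hcover w hadj.reachable)

section Threads

variable [Fintype V] [DecidableRel G.Adj] {T : Set V}

lemma IsBPVC.length_add_two_le {k : ℕ} {P : Set V} (hP : G.IsBPVC k P)
    (hT : ∀ v ∈ T, G.degree v = 2 ∧ v ∉ P) {u v : V} {p : (G.spanningInduce T).Walk u v}
    (hp : p.IsPath) (hu : u ∈ T) : p.length + 2 ≤ k := by
  by_contra! hk
  have hpath : G.IsUPath k p.getVert :=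
    ⟨fun i hi => spanningInduce_le (p.adj_getVert_succ (by omega)),
      fun i j hi hj h => hp.getVert_injOn (by simp; omega) (by simp; omega) h⟩
  have hmem : ∀ i, p.getVert i ∈ T := fun i => (p.take i).reachable.mem_of_spanningInduce hu
  rcases hP.2 _ hpath with ⟨i, -, hi⟩ | ⟨i, -, hi⟩
  · rw [udeg_eq_degree, (hT _ (hmem i)).1] at hi
    omega
  · exact (hT _ (hmem i)).2 hi

lemma IsBPVC.ncard_reachable_add_one_le {k : ℕ} {P : Set V} (hP : G.IsBPVC k P)
    (hT : ∀ v ∈ T, G.degree v = 2 ∧ v ∉ P) {b : V} (hb : b ∈ T) :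
    {y | (G.spanningInduce T).Reachable b y}.ncard + 1 ≤ k := by
  classical
  obtain ⟨u, v, p, hp, hcover⟩ := exists_isPath_forall_mem_support_iff_reachable
    (degree_spanningInduce_le_two fun v hv => (hT v hv).1) b
  have hu : u ∈ T := ((hcover u).1 p.start_mem_support).mem_of_spanningInduce hb
  have hcard : {y | (G.spanningInduce T).Reachable b y}.ncard = p.length + 1 := by
    rw [← p.length_support, ← List.toFinset_card_of_nodup hp.support_nodup, ← Set.ncard_coe_finset]
    congr 1
    ext y
    simp [hcover]
  have := hP.length_add_two_le hT hp hu
  omega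

lemma IsAcyclic.exists_adj_notMem_of_spanningInduce (hG : G.IsAcyclic)
    (hT : ∀ v ∈ T, G.degree v = 2) {u v : V} {p : (G.spanningInduce T).Walk u v}
    (hp : p.IsPath) (hcover : ∀ y, (G.spanningInduce T).Reachable u y → y ∈ p.support)
    (hu : u ∈ T) : ∃ w, G.Adj w u ∧ w ∉ T := by
  obtain ⟨x, y, hxy, hx, hy⟩ := exists_adj_adj_of_degree_eq_two (hT u hu)
  by_contra! h
  exact hxy ((hG.eq_snd_of_adj_of_spanningInduce hp hcover hu hx (h x hx.symm)).trans
    (hG.eq_snd_of_adj_of_spanningInduce hp hcover hu hy (h y hy.symm)).symm)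

lemma IsAcyclic.one_lt_ncard_darts (hG : G.IsAcyclic) (hT : ∀ v ∈ T, G.degree v = 2)
    {b : V} (hb : b ∈ T) :
    1 < {d : G.Dart | d.fst ∉ T ∧ (G.spanningInduce T).Reachable b d.snd}.ncard := by
  classical
  set H := G.spanningInduce T
  obtain ⟨u, v, p, hp, hcover⟩ :=
    exists_isPath_forall_mem_support_iff_reachable (degree_spanningInduce_le_two hT) b
  have hbu : H.Reachable b u := (hcover u).1 p.start_mem_support
  have hbv : H.Reachable b v := (hcover v).1 p.end_mem_support
  have hu := hbu.mem_of_spanningInduce hb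
  have hcover_u : ∀ y, H.Reachable u y → y ∈ p.support := fun y h => (hcover y).2 (hbu.trans h)
  rw [Set.one_lt_ncard_iff]
  rcases Nat.eq_zero_or_pos p.length with hlen | hlen
  · have hsnd : p.snd = u := by
      rw [Walk.snd, p.getVert_of_length_le (by omega), Walk.eq_of_length_eq_zero hlen]
    have hout : ∀ w, G.Adj u w → w ∉ T := fun w huw hw =>
      huw.ne (hsnd ▸ hG.eq_snd_of_adj_of_spanningInduce hp hcover_u hu huw hw).symm
    obtain ⟨x, y, hxy, hx, hy⟩ := exists_adj_adj_of_degree_eq_two (hT u hu)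
    exact ⟨⟨(x, u), hx.symm⟩, ⟨(y, u), hy.symm⟩, ⟨hout x hx, hbu⟩, ⟨hout y hy, hbu⟩,
      fun h => hxy (congrArg (·.fst) h)⟩
  · have hcover_v : ∀ y, H.Reachable v y → y ∈ p.reverse.support := fun y h => by
      simpa using (hcover y).2 (hbv.trans h)
    obtain ⟨wu, hwu, hwuT⟩ := hG.exists_adj_notMem_of_spanningInduce hT hp hcover_u hu
    obtain ⟨wv, hwv, hwvT⟩ := hG.exists_adj_notMem_of_spanningInduce hT hp.reverse hcover_v
      (hbv.mem_of_spanningInduce hb)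
    have huv : u ≠ v := fun h => hlen.ne' (Walk.length_eq_zero_iff.2 (hp.nil_iff_eq.2 h))
    exact ⟨⟨(wu, u), hwu⟩, ⟨(wv, v), hwv⟩, ⟨hwuT, hbu⟩, ⟨hwvT, hbv⟩,
      fun h => huv (congrArg (·.snd) h)⟩

lemma IsBPVC.card_mul_two_le (hG : G.IsAcyclic) {k : ℕ} {P : Set V} (hP : G.IsBPVC k P)
    [DecidablePred (· ∈ T)] (hT : ∀ v ∈ T, G.degree v = 2 ∧ v ∉ P) :
    #{v | v ∈ T} * 2 ≤ (∑ v with v ∉ T, G.degree v) * (k - 1) := by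
  classical
  let X : Finset G.Dart := {d | d.fst ∉ T ∧ d.snd ∈ T}
  have hdouble : #{v | v ∈ T} * 2 ≤ #X * (k - 1) := by
    refine card_mul_le_card_mul (fun y d => (G.spanningInduce T).Reachable y d.snd)
      (fun y hy => ?_) (fun d hd => ?_)
    · have hy : y ∈ T := by simpa using hy
      have := hG.one_lt_ncard_darts (fun v hv => (hT v hv).1) hy
      rw [Set.ncard_eq_toFinset_card'] at this
      refine this.trans_le (card_le_card fun d hd => ?_)
      simp only [Set.mem_toFinset, Set.mem_ofPred_eq] at hd
      simp only [bipartiteAbove, X, mem_filter, mem_univ, true_and]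
      exact ⟨⟨hd.1, hd.2.mem_of_spanningInduce hy⟩, hd.2⟩
    · have hd : d.snd ∈ T := by simp only [X, mem_filter] at hd; exact hd.2.2
      have := hP.ncard_reachable_add_one_le hT hd
      calc #((univ.filter (· ∈ T)).bipartiteBelow _ d)
          ≤ {y | (G.spanningInduce T).Reachable d.snd y}.ncard := by
            rw [← Set.ncard_coe_finset]
            refine Set.ncard_le_ncard (fun y hy => ?_)
            simp only [bipartiteBelow, coe_filter, Set.mem_ofPred_eq] at hy
            exact hy.2.symm
        _ ≤ k - 1 := by omega
  have hX : #X ≤ ∑ v with v ∉ T, G.degree v := by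
    rw [card_eq_sum_card_fiberwise (f := (·.fst)) (t := {v | v ∉ T})
      (fun d hd => by simp_all [X])]
    gcongr with v
    rw [← dart_fst_fiber_card_eq_degree]
    exact card_le_card (monotone_filter_left _ (subset_univ X))
  calc #{v | v ∈ T} * 2 ≤ #X * (k - 1) := hdouble
    _ ≤ _ := by gcongr

lemma IsAcyclic.sum_degree_add_two_le_of_degree_eq_two (hG : G.IsAcyclic)
    [DecidablePred (· ∈ T)] (hT : ∀ v ∈ T, G.degree v = 2) {a b : V} (hab : G.Adj a b) :
    ∑ v with v ∉ T, G.degree v + 2 ≤ 2 * #{v | v ∉ T ∧ G.degree v ≠ 0} := by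
  have h := hG.sum_degrees_add_two_le hab
  have hsumT : ∑ v with v ∈ T, G.degree v = 2 * #{v | v ∈ T} := by
    rw [sum_const_nat fun v hv => hT v (mem_filter.1 hv).2, mul_comm]
  have hsupp : #{v | G.degree v ≠ 0} = #{v | v ∈ T} + #{v | v ∉ T ∧ G.degree v ≠ 0} := by
    rw [← card_filter_add_card_filter_not (s := {v | G.degree v ≠ 0}) (· ∈ T), filter_filter,
      filter_filter]
    congr 2 <;> ext v <;> simp only [mem_filter, mem_univ, true_and]
    · exact and_iff_right_of_imp fun hv => by rw [hT v hv]; omega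
    · exact and_comm
  rw [← sum_filter_add_sum_filter_not _ (· ∈ T), hsumT, hsupp] at h
  omega

-- Summed over the vertices outside the threads, these weights combine with the thread bound
-- `IsBPVC.card_mul_two_le` and `3k - 1` times the forest bound so that the degree sum cancels.
lemma IsBPVC.weight_le {k : ℕ} (hk : 1 ≤ k) {P : Set V} [DecidablePred (· ∈ P)]
    (hP : G.IsBPVC k P) {v : V}
    (hv : ¬(G.degree v = 2 ∧ v ∉ P)) :
    2 + 6 * k * (if G.degree v ≠ 0 then 1 else 0) ≤
      2 * k * G.degree v + 4 * k * (if v ∈ P then 1 else 0) +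
        2 * (if G.degree v ≠ 0 then 1 else 0) := by
  rcases le_or_gt (G.degree v) 2 with hd | hd
  · have hvP : v ∈ P := by
      by_contra hvP
      have : ¬ G.degree v ≤ 1 := fun h => hvP (hP.1 v ((udeg_eq_degree v).trans_le h))
      exact hv ⟨by omega, hvP⟩
    rw [if_pos hvP]
    split_ifs with h0
    · nlinarith [Nat.pos_of_ne_zero h0]
    · omega
  · rw [if_pos (by omega : G.degree v ≠ 0)]
    have := Nat.mul_le_mul_left (2 * k) (show 3 ≤ G.degree v by omega)
    split_ifs <;> omega

lemma IsBPVC.card_add_three_mul_le (hG : G.IsAcyclic) {k : ℕ} (hk : 1 ≤ k) {P : Set V}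
    (hP : G.IsBPVC k P) {a b : V} (hab : G.Adj a b) :
    Fintype.card V + 3 * k ≤ 2 * k * P.ncard + 1 := by
  classical
  set T : Set V := {v | G.degree v = 2 ∧ v ∉ P}
  set s := ∑ v with v ∉ T, G.degree v
  set N := #{v | v ∉ T ∧ G.degree v ≠ 0}
  have hthreads : #{v | v ∈ T} * 2 ≤ s * (k - 1) := hP.card_mul_two_le hG fun v hv => hv
  have hforest : s + 2 ≤ 2 * N :=
    hG.sum_degree_add_two_le_of_degree_eq_two (fun v hv => (show v ∈ T from hv).1) hab
  have hweights : #{v | v ∉ T} * 2 + 6 * k * N ≤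
      2 * k * s + 4 * k * #{v | v ∉ T ∧ v ∈ P} + 2 * N := by
    simpa only [sum_add_distrib, ← mul_sum, sum_const, sum_boole, smul_eq_mul, filter_filter,
      Nat.cast_id] using
      sum_le_sum (s := {v | v ∉ T}) fun v hv => hP.weight_le hk (by simpa [T] using hv)
  have hP' : #{v | v ∉ T ∧ v ∈ P} ≤ P.ncard := by
    rw [Set.ncard_eq_toFinset_card']
    exact card_le_card fun v hv => by simp_all
  have hcard : Fintype.card V = #{v | v ∈ T} + #{v | v ∉ T} :=
    (card_filter_add_card_filter_not _).symm
  obtain ⟨j, rfl⟩ := Nat.exists_eq_add_of_le' hk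
  rw [Nat.add_sub_cancel] at hthreads
  nlinarith [Nat.mul_le_mul_left (3 * j + 2) hforest, Nat.mul_le_mul_left (j + 1) hP']

end Threads

end SimpleGraph

/-- Lower bound for the undirected case: every branching `k`-path vertex cover of an
undirected forest on `n ≥ 2` vertices has at least `(n + 3k - 1)/(2k)` vertices. -/
theorem stmt2 {V : Type} [Fintype V] (G : SimpleGraph V) (hG : G.IsAcyclic) (k : ℕ)
    (hn : 2 ≤ Nat.card V) (hk : 2 ≤ k) (P : Set V) (hP : G.IsBPVC k P) :
    ((Nat.card V : ℚ) + 3 * k - 1) / (2 * k) ≤ P.ncard := by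
  classical
  have hkq : (2 : ℚ) ≤ k := by exact_mod_cast hk
  rw [div_le_iff₀ (by linarith)]
  by_cases hE : ∃ a b, G.Adj a b
  · obtain ⟨a, b, hab⟩ := hE
    have hbound := hP.card_add_three_mul_le hG (by omega) hab
    rw [Nat.card_eq_fintype_card]
    have hboundq : (Fintype.card V : ℚ) + 3 * k ≤ 2 * k * P.ncard + 1 := by
      exact_mod_cast hbound
    linarith
  · push Not at hE
    have hPuniv : P = Set.univ :=
      Set.eq_univ_of_forall fun v => hP.1 v <| by simp [SimpleGraph.udeg, hE]
    have hnq : (2 : ℚ) ≤ Nat.card V := by exact_mod_cast hn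
    rw [hPuniv, Set.ncard_univ]
    nlinarith
end

section
/- For every k ≥ 2 and every i ≥ 1 there exists an undirected forest (in fact, a tree) F on n = k(2i−1)+1 vertices admitting a branching k-path vertex cover of size exactly i+1 = (n + 3k − 1)/(2k); hence the lower bound (n+3k−1)/(2k) is tight for undirected forests. -/
/-! Write `i = b + 1`. The tree is a caterpillar: a spine `(0, t)`, `0 ≤ t ≤ (b + 1) k`, and for
each `1 ≤ j ≤ b` a leg `(j, 1), …, (j, k)` attached at `(0, j k)`. Its vertices of degree at most
one are the two ends of the spine and the `b` leg tips, and these `b + 2` vertices form the cover.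
A vertex `(j, t)` with `k ∣ t` is either in the cover or an attachment point, of degree 3.
Deleting all of them leaves spine segments and tipless legs of `k - 1` vertices each, so every
path on `k` vertices meets one of them. -/

namespace SimpleGraph

variable {V : Type}

theorem card_le_udeg [Finite V] (G : SimpleGraph V) {v : V} {s : Finset V}
    (hs : ∀ w ∈ s, G.Adj v w) : s.card ≤ G.udeg v := by
  rw [udeg, Nat.card_coe_set_eq, ← Set.ncard_coe_finset]
  exact Set.ncard_le_ncard hs

theorem IsUPath.exists_mem_of_ncard_block_lt [Finite V] {G : SimpleGraph V} {k : ℕ}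
    {p : ℕ → V} (hp : G.IsUPath k p) {S : Set V} {β : Type*} (block : V → β)
    (hblock : ∀ u w, G.Adj u w → u ∉ S → w ∉ S → block u = block w)
    (hcard : ∀ c, {v | v ∉ S ∧ block v = c}.ncard < k) : ∃ i < k, p i ∈ S := by
  by_contra! hp_out
  have hconst : ∀ i < k, block (p i) = block (p 0) := by
    intro i
    induction i with
    | zero => exact fun _ => rfl
    | succ i ih =>
      intro hi
      rw [← ih (by omega)]
      exact (hblock _ _ (hp.1 i hi) (hp_out i (by omega)) (hp_out _ hi)).symm
  have hk : k ≤ {v | v ∉ S ∧ block v = block (p 0)}.ncard := calc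
    k = (p '' Set.Iio k).ncard := by
      rw [Set.InjOn.ncard_image (s := Set.Iio k) fun i hi j hj => hp.2 i j hi hj, Set.ncard_Iio_nat]
    _ ≤ _ := Set.ncard_le_ncard (by rintro _ ⟨i, hi, rfl⟩; exact ⟨hp_out i hi, hconst i hi⟩)
  exact (hcard _).not_ge hk

def parentGraph (pr : V → V) : SimpleGraph V := fromRel fun u v => pr u = v

section parentGraph

variable {pr : V → V} {root : V} {height : V → ℕ}

theorem parentGraph_adj {u v : V} :
    (parentGraph pr).Adj u v ↔ u ≠ v ∧ (pr u = v ∨ pr v = u) :=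
  fromRel_adj _ _ _

theorem parentGraph_adj_parent (hheight : ∀ v ≠ root, height (pr v) < height v) {v : V}
    (hv : v ≠ root) : (parentGraph pr).Adj v (pr v) :=
  parentGraph_adj.2 ⟨fun h => (hheight v hv).ne (by rw [← h]), Or.inl rfl⟩

theorem parentGraph_reachable_root (hheight : ∀ v ≠ root, height (pr v) < height v) (v : V) :
    (parentGraph pr).Reachable v root := by
  induction hv : height v using Nat.strong_induction_on generalizing v with
  | _ n ih =>
    by_cases hvr : v = root
    · exact hvr ▸ .rfl
    · exact (parentGraph_adj_parent hheight hvr).reachable.trans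
        (ih _ (hv ▸ hheight v hvr) (pr v) rfl)

theorem parentGraph_isTree [Finite V] (hroot : pr root = root)
    (hheight : ∀ v ≠ root, height (pr v) < height v) : (parentGraph pr).IsTree := by
  have hconn : (parentGraph pr).Connected :=
    have : Nonempty V := ⟨root⟩
    .mk fun u v => (parentGraph_reachable_root hheight u).trans
      (parentGraph_reachable_root hheight v).symm
  refine isTree_iff_connected_and_card.2 ⟨hconn, ?_⟩
  let edge : ↥({root}ᶜ : Set V) → (parentGraph pr).edgeSet := fun v =>
    ⟨s(v.1, pr v.1), parentGraph_adj_parent hheight v.2⟩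
  have hedge : Function.Bijective edge := by
    refine ⟨fun u v huv => ?_, ?_⟩
    · have hsym : s(u.1, pr u.1) = s(v.1, pr v.1) := congrArg Subtype.val huv
      rcases Sym2.eq_iff.1 hsym with ⟨h, -⟩ | ⟨hu, hv⟩
      · exact Subtype.ext h
      · have hvu := hheight u u.2
        have huv := hheight v v.2
        rw [hv] at hvu
        rw [← hu] at huv
        omega
    · rintro ⟨e, he⟩
      induction e using Sym2.ind with
      | _ x y =>
      have hne_root : ∀ {x y : V}, x ≠ y → pr x = y → x ≠ root := by
        rintro x y hxy rfl rfl
        exact hxy hroot.symm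
      obtain ⟨hxy, hpr | hpr⟩ := parentGraph_adj.1 he
      · exact ⟨⟨x, hne_root hxy hpr⟩, Subtype.ext (by simp [edge, hpr])⟩
      · exact ⟨⟨y, hne_root hxy.symm hpr⟩, Subtype.ext (by simp [edge, hpr, Sym2.eq_swap])⟩
  rw [← Nat.card_eq_of_bijective edge hedge, Nat.card_coe_set_eq, ← Set.ncard_univ,
    ← Set.ncard_sdiff_singleton_add_one (Set.mem_univ root), Set.compl_eq_univ_sdiff]

theorem card_add_one_le_udeg_parentGraph [Finite V] (hroot : pr root = root)
    (hheight : ∀ v ≠ root, height (pr v) < height v) {v : V} (hv : v ≠ root) {s : Finset V}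
    (hs : ∀ w ∈ s, pr w = v) : s.card + 1 ≤ (parentGraph pr).udeg v := by
  classical
  have hpr : pr v ∉ s := by
    intro h
    have hpr_root : pr v ≠ root := fun h' => hv (by rw [← hs _ h, h', hroot])
    have := hheight _ hpr_root
    rw [hs _ h] at this
    exact (hheight v hv).not_gt this
  calc s.card + 1 = (insert (pr v) s).card := (Finset.card_insert_of_notMem hpr).symm
    _ ≤ _ := by
      refine card_le_udeg _ fun w hw => ?_
      rcases Finset.mem_insert.1 hw with rfl | hw
      · exact parentGraph_adj_parent hheight hv
      · refine parentGraph_adj.2 ⟨fun hvw => ?_, Or.inr (hs w hw)⟩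
        subst hvw
        exact (hheight v hv).ne (by rw [hs v hw])

end parentGraph

end SimpleGraph

open SimpleGraph

def caterpillarVerts (k b : ℕ) : Finset (ℕ × ℕ) :=
  {0} ×ˢ Finset.range ((b + 1) * k + 1) ∪ Finset.Icc 1 b ×ˢ Finset.Icc 1 k

abbrev Caterpillar (k b : ℕ) : Type := caterpillarVerts k b

namespace Caterpillar

variable {k b : ℕ}

theorem mem_verts {x : ℕ × ℕ} :
    x ∈ caterpillarVerts k b ↔
      (x.1 = 0 ∧ x.2 ≤ (b + 1) * k) ∨ (1 ≤ x.1 ∧ x.1 ≤ b ∧ 1 ≤ x.2 ∧ x.2 ≤ k) := by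
  simp only [caterpillarVerts, Finset.mem_union, Finset.mem_product, Finset.mem_singleton,
    Finset.mem_range, Finset.mem_Icc, Nat.lt_succ_iff]
  tauto

theorem natCard_eq : Nat.card (Caterpillar k b) = (b + 1) * k + 1 + b * k := by
  rw [Nat.card_eq_finsetCard, caterpillarVerts, Finset.card_union_of_disjoint, Finset.card_product,
    Finset.card_product]
  · simp
  · rw [Finset.disjoint_left]
    simp only [Finset.mem_product, Finset.mem_singleton, Finset.mem_Icc]
    omega

def parent₀ (k : ℕ) (x : ℕ × ℕ) : ℕ × ℕ :=
  if x.1 ≠ 0 ∧ x.2 ≤ 1 then (0, x.1 * k) else (x.1, x.2 - 1)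

theorem parent₀_mem {x : ℕ × ℕ} (hx : x ∈ caterpillarVerts k b) :
    parent₀ k x ∈ caterpillarVerts k b := by
  rw [mem_verts] at hx ⊢
  unfold parent₀
  split_ifs with h
  · have : x.1 * k ≤ (b + 1) * k := Nat.mul_le_mul_right k (by omega)
    simp only [true_and, true_or, this]
  · omega

def parent (v : Caterpillar k b) : Caterpillar k b := ⟨parent₀ k v.1, parent₀_mem v.2⟩

def root : Caterpillar k b := ⟨(0, 0), mem_verts.2 (.inl ⟨rfl, Nat.zero_le _⟩)⟩

def height (v : Caterpillar k b) : ℕ := v.1.1 * k + v.1.2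

theorem parent_root : parent (root : Caterpillar k b) = root := rfl

theorem height_parent_lt {v : Caterpillar k b} (hv : v ≠ root) : height (parent v) < height v := by
  obtain ⟨⟨a, t⟩, hvert⟩ := v
  have hne : (a, t) ≠ (0, 0) := fun h => hv (Subtype.ext h)
  rw [mem_verts] at hvert
  simp only [ne_eq, Prod.mk.injEq, not_and] at hne
  simp only [height, parent, parent₀]
  split_ifs <;> simp only [zero_mul] <;> omega

def graph (k b : ℕ) : SimpleGraph (Caterpillar k b) := parentGraph parent

theorem isTree : (graph k b).IsTree :=
  parentGraph_isTree parent_root fun _ => height_parent_lt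

/-- Indexes the pieces left after deleting the vertices `(j, t)` with `k ∣ t`. -/
def segment (v : Caterpillar k b) : ℕ × ℕ := (v.1.1, v.1.2 / k)

theorem segment_parent {v : Caterpillar k b} (hv : v.1.2 % k ≠ 0) (hpv : (parent v).1.2 % k ≠ 0) :
    segment (parent v) = segment v := by
  obtain ⟨⟨a, t⟩, hvert⟩ := v
  have ht : t ≠ 0 := by
    rintro rfl
    exact hv (Nat.zero_mod k)
  obtain ⟨n, rfl⟩ := Nat.exists_eq_add_one_of_ne_zero ht
  simp only [segment, parent, parent₀] at hpv ⊢
  split_ifs at hpv ⊢ with h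
  · exact absurd (Nat.mul_mod_left _ _) hpv
  · rw [Nat.add_sub_cancel, Nat.succ_div_of_not_dvd fun hdvd => hv (Nat.mod_eq_zero_of_dvd hdvd)]

theorem segment_eq_of_adj {u w : Caterpillar k b} (h : (graph k b).Adj u w)
    (hu : u.1.2 % k ≠ 0) (hw : w.1.2 % k ≠ 0) : segment u = segment w := by
  rcases (parentGraph_adj.1 h).2 with rfl | rfl
  · exact (segment_parent hu hw).symm
  · exact segment_parent hw hu

theorem ncard_segment_lt (hk : 0 < k) (c : ℕ × ℕ) :
    {v : Caterpillar k b | v.1.2 % k ≠ 0 ∧ segment v = c}.ncard < k := by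
  set T := {v : Caterpillar k b | v.1.2 % k ≠ 0 ∧ segment v = c}
  have hinj : Set.InjOn (fun v : Caterpillar k b => v.1.2) T := by
    rintro v ⟨-, hv⟩ w ⟨-, hw⟩ h
    rw [← hw, segment, segment, Prod.mk.injEq] at hv
    exact Subtype.ext (Prod.ext hv.1 h)
  have hsub : (fun v : Caterpillar k b => v.1.2) '' T ⊆ ↑(Finset.Ioo (c.2 * k) (c.2 * k + k)) := by
    rintro _ ⟨v, ⟨hmod, hseg⟩, rfl⟩
    have hdiv : v.1.2 / k = c.2 := congrArg Prod.snd hseg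
    have hdecomp := Nat.div_add_mod' v.1.2 k
    rw [hdiv] at hdecomp
    have := Nat.mod_lt v.1.2 hk
    simp only [Finset.coe_Ioo, Set.mem_Ioo]
    omega
  calc T.ncard = ((fun v : Caterpillar k b => v.1.2) '' T).ncard := (hinj.ncard_image).symm
    _ ≤ (Finset.Ioo (c.2 * k) (c.2 * k + k)).card := by
      rw [← Set.ncard_coe_finset]
      exact Set.ncard_le_ncard hsub
    _ < k := by rw [Nat.card_Ioo]; omega

def coverVerts (k b : ℕ) : Finset (ℕ × ℕ) :=
  {(0, 0), (0, (b + 1) * k)} ∪ Finset.Icc 1 b ×ˢ {k}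

def cover (k b : ℕ) : Set (Caterpillar k b) := Subtype.val ⁻¹' coverVerts k b

theorem mem_coverVerts {x : ℕ × ℕ} :
    x ∈ coverVerts k b ↔ x = (0, 0) ∨ x = (0, (b + 1) * k) ∨ (1 ≤ x.1 ∧ x.1 ≤ b ∧ x.2 = k) := by
  simp only [coverVerts, Finset.mem_union, Finset.mem_insert, Finset.mem_singleton,
    Finset.mem_product, Finset.mem_Icc]
  tauto

theorem ncard_cover (hk : 0 < k) : (cover k b).ncard = b + 2 := by
  have hsub : ↑(coverVerts k b) ⊆ Set.range (Subtype.val : Caterpillar k b → ℕ × ℕ) := by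
    intro x hx
    rw [Subtype.range_coe_subtype, Set.mem_ofPred_eq, mem_verts]
    rcases mem_coverVerts.1 hx with rfl | rfl | hx
    · simp
    · simp
    · omega
  have hdisj : Disjoint ({(0, 0), (0, (b + 1) * k)} : Finset (ℕ × ℕ)) (Finset.Icc 1 b ×ˢ {k}) := by
    rw [Finset.disjoint_left]
    simp only [Finset.mem_insert, Finset.mem_singleton, Finset.mem_product, Finset.mem_Icc]
    rintro _ (rfl | rfl) <;> simp
  have hne : ((0, 0) : ℕ × ℕ) ≠ (0, (b + 1) * k) := by
    simp only [ne_eq, Prod.mk.injEq, true_and]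
    positivity
  rw [cover, Set.ncard_preimage_of_injective_subset_range
    Subtype.val_injective hsub, Set.ncard_coe_finset, coverVerts,
    Finset.card_union_of_disjoint hdisj, Finset.card_pair hne, Finset.card_product]
  simp only [Nat.card_Icc, add_tsub_cancel_right, Finset.card_singleton, mul_one]
  omega

theorem mem_cover_or_three_le_udeg (hk : 0 < k) {v : Caterpillar k b} (hv : v.1.2 % k = 0) :
    v ∈ cover k b ∨ 3 ≤ (graph k b).udeg v := by
  obtain ⟨⟨a, t⟩, hvert⟩ := v
  obtain ⟨q, rfl⟩ := Nat.dvd_of_mod_eq_zero hv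
  simp only [cover, Set.mem_preimage, Finset.mem_coe, mem_coverVerts]
  rcases mem_verts.1 hvert with ⟨rfl, ht⟩ | ⟨ha1, hab, ht1, htk⟩
  · rcases Nat.eq_zero_or_pos q with rfl | hq0
    · simp
    rcases (Nat.le_of_mul_le_mul_left (ht.trans_eq (mul_comm _ _)) hk).eq_or_lt with rfl | hqb
    · simp [mul_comm]
    right
    have hkq : k * q + 1 ≤ (b + 1) * k := by
      have := Nat.mul_le_mul_left k (Nat.lt_succ_iff.1 hqb)
      rw [add_mul, one_mul, mul_comm b]
      omega
    let w₁ : Caterpillar k b := ⟨(0, k * q + 1), mem_verts.2 (.inl ⟨rfl, hkq⟩)⟩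
    let w₂ : Caterpillar k b := ⟨(q, 1), mem_verts.2 (.inr ⟨hq0, by omega, le_rfl, hk⟩)⟩
    have hv : (⟨(0, k * q), hvert⟩ : Caterpillar k b) ≠ root := by
      simp [root, Nat.pos_iff_ne_zero.1 hk, hq0.ne']
    have hw : w₁ ≠ w₂ := by simp [w₁, w₂, hq0.ne]
    have := card_add_one_le_udeg_parentGraph parent_root (fun _ => height_parent_lt) hv
      (s := {w₁, w₂}) (by simp [w₁, w₂, parent, parent₀, hq0.ne', mul_comm])
    rwa [Finset.card_pair hw] at this
  · left
    have := Nat.eq_of_dvd_of_lt_two_mul (by omega) (dvd_mul_right k q) (by omega)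
    omega

theorem mem_cover_of_udeg_le_one (v : Caterpillar k b) (hv : (graph k b).udeg v ≤ 1) :
    v ∈ cover k b := by
  by_contra hcover
  obtain ⟨⟨a, t⟩, hvert⟩ := v
  simp only [cover, Set.mem_preimage, Finset.mem_coe, mem_coverVerts, Prod.mk.injEq] at hcover
  have hvert' := mem_verts.1 hvert
  let child : Caterpillar k b := ⟨(a, t + 1), mem_verts.2 (by omega)⟩
  have hv : (⟨(a, t), hvert⟩ : Caterpillar k b) ≠ root := by
    simp only [root, ne_eq, Subtype.mk.injEq, Prod.mk.injEq]
    omega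
  have hchild : parent child = ⟨(a, t), hvert⟩ := by
    simp only [child, parent, parent₀, Subtype.mk.injEq]
    rw [if_neg (by omega), Nat.add_sub_cancel]
  have : ({child} : Finset _).card + 1 ≤ (graph k b).udeg _ :=
    card_add_one_le_udeg_parentGraph parent_root (fun _ => height_parent_lt) hv
      (by simpa using hchild)
  rw [Finset.card_singleton] at this
  omega

theorem isBPVC_cover (hk : 0 < k) : (graph k b).IsBPVC k (cover k b) := by
  refine ⟨mem_cover_of_udeg_le_one, fun p hp => ?_⟩
  obtain ⟨j, hj, hjS⟩ := hp.exists_mem_of_ncard_block_lt (S := {v | v.1.2 % k = 0}) segment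
    (fun _ _ h hu hw => segment_eq_of_adj h hu hw) (ncard_segment_lt hk)
  rcases mem_cover_or_three_le_udeg hk hjS with h | h
  exacts [.inr ⟨j, hj, h⟩, .inl ⟨j, hj, h⟩]

end Caterpillar

/-- Tightness of the undirected lower bound: for every `k ≥ 2` and `i ≥ 1` there is a
tree on `n = k(2i-1)+1` vertices with a branching `k`-path vertex cover of size
`i + 1 = (n + 3k - 1)/(2k)`. -/
theorem stmt3 (k i : ℕ) (hk : 2 ≤ k) (hi : 1 ≤ i) :
    ∃ (V : Type) (_ : Fintype V) (G : SimpleGraph V) (P : Set V),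
      G.IsTree ∧ Nat.card V = k * (2 * i - 1) + 1 ∧ G.IsBPVC k P ∧
      P.ncard = i + 1 := by
  obtain ⟨b, rfl⟩ : ∃ b, i = b + 1 := ⟨i - 1, by omega⟩
  refine ⟨Caterpillar k b, inferInstance, Caterpillar.graph k b, Caterpillar.cover k b,
    Caterpillar.isTree, ?_, Caterpillar.isBPVC_cover (by omega), Caterpillar.ncard_cover (by omega)⟩
  rw [Caterpillar.natCard_eq, show 2 * (b + 1) - 1 = 2 * b + 1 by omega]
  ring
end

section
/- Let F be a rooted directed forest and P a branching k-path vertex cover of F. Let v1 be a leaf of F, and follow ancestors v1, v2, ..., stopping at v_q when v_q is a root, or the parent of v_q is a branching vertex, or the parent of v_q belongs to P. Then q ≤ k, and the only vertex of P on the directed path v_q, ..., v1 is v1. -/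
/-- Following ancestors `v 0, v 1, …` from a leaf `v 0` and stopping at `v (q-1)`
when it is a root, or its parent is branching, or its parent belongs to `P`
(the process not having stopped earlier), the resulting directed path has
`q ≤ k` vertices and `v 0` is its only vertex in `P`. -/
theorem stmt5 {V : Type} [Fintype V] (F : RDForest V) (k : ℕ) (hk : 2 ≤ k)
    (P : Set V) (hP : F.IsBPVC k P) (q : ℕ) (hq : 1 ≤ q) (v : ℕ → V)
    (hleaf : F.IsLeaf (v 0))
    (hchain : ∀ i, i + 1 < q → F.parent (v i) = some (v (i + 1)))
    (hnostop : ∀ i, i + 1 < q → ¬ F.IsBranching (v (i + 1)) ∧ v (i + 1) ∉ P)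
    (hstop : F.parent (v (q - 1)) = none ∨
      ∃ u, F.parent (v (q - 1)) = some u ∧ (F.IsBranching u ∨ u ∈ P)) :
    q ≤ k ∧ v 0 ∈ P ∧ ∀ i, 0 < i → i < q → v i ∉ P := by
  have hmid : ∀ j, 1 ≤ j → j < q → ¬ F.IsBranching (v j) ∧ v j ∉ P := by
    intro j h1 h2
    have := hnostop (j - 1) (by omega)
    have hje : j - 1 + 1 = j := by omega
    rwa [hje] at this
  refine ⟨?_, hP.1 _ hleaf, fun i hi hiq => (hmid i hi hiq).2⟩
  by_contra h
  push_neg at h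
  have hpath : F.IsDPath k (fun i => v (k - i)) := by
    intro i hik
    have hki : k - (i + 1) + 1 = k - i := by omega
    have := hchain (k - (i + 1)) (by omega)
    rwa [hki] at this
  rcases hP.2 _ hpath with ⟨i, hik, hb⟩ | ⟨i, hik, hb⟩
  · exact (hmid (k - i) (by omega) (by omega)).1 hb
  · exact (hmid (k - i) (by omega) (by omega)).2 hb
end

section
/- Let T be an undirected tree on at least 2 vertices, u a leaf of T with neighbor v, and H the rooted directed tree obtained by deleting u, rooting at v, and orienting edges away from v. If P is a branching k-path vertex cover of T, then Q = P ∩ V(H) is a branching k-path vertex cover of the rooted directed tree H. -/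
open SimpleGraph

section Aux

variable {V : Type} (T : SimpleGraph V) {v : V}

/-- In a tree, adjacent vertices have different distances from any vertex. -/
lemma tree_adj_dist_ne (hT : T.IsTree) (v : V) {x y : V} (hxy : T.Adj x y) :
    T.dist v x ≠ T.dist v y := by
  classical
  intro h
  obtain ⟨p1, hp1, hl1⟩ := hT.isConnected.exists_path_of_dist v x
  by_cases hm : y ∈ p1.support
  · -- dist v y < dist v x, contradicting equality
    have h1 : T.dist v y ≤ (p1.takeUntil y hm).length := SimpleGraph.dist_le _
    have h2 : (p1.takeUntil y hm).length + (p1.dropUntil y hm).length = p1.length := by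
      rw [← SimpleGraph.Walk.length_append, SimpleGraph.Walk.take_spec]
    have hne : (p1.takeUntil y hm).length ≠ p1.length := by
      intro he
      have : (p1.dropUntil y hm).length = 0 := by omega
      exact hxy.ne (SimpleGraph.Walk.eq_of_length_eq_zero this).symm
    have := SimpleGraph.Walk.length_takeUntil_le p1 hm
    omega
  · -- p1.concat is a longer path from v to y, contradicting uniqueness
    have hW : (p1.concat hxy).IsPath := by
      rw [← SimpleGraph.Walk.isPath_reverse_iff, SimpleGraph.Walk.reverse_concat]
      refine hp1.reverse.cons ?_
      simpa using hm
    obtain ⟨p2, hp2, hl2⟩ := hT.isConnected.exists_path_of_dist v y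
    have := (hT.existsUnique_path v y).unique hW hp2
    have : (p1.concat hxy).length = p2.length := by rw [this]
    rw [SimpleGraph.Walk.length_concat] at this
    omega

/-- In a tree, adjacent vertices have distances from `v` differing by exactly one. -/
lemma tree_adj_dist (hT : T.IsTree) (v : V) {x y : V} (hxy : T.Adj x y) :
    T.dist v y = T.dist v x + 1 ∨ T.dist v x = T.dist v y + 1 := by
  have h1 : T.dist v y ≤ T.dist v x + 1 := by
    have := hT.isConnected.dist_triangle (u := v) (v := x) (w := y)
    rwa [(SimpleGraph.dist_eq_one_iff_adj).2 hxy] at this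
  have h2 : T.dist v x ≤ T.dist v y + 1 := by
    have := hT.isConnected.dist_triangle (u := v) (v := y) (w := x)
    rwa [(SimpleGraph.dist_eq_one_iff_adj).2 hxy.symm] at this
  have h3 := tree_adj_dist_ne T hT v hxy
  omega

/-- In a tree, a vertex has at most one neighbor closer to `v`. -/
lemma tree_uniq_closer (hT : T.IsTree) (v : V) {x y₁ y₂ : V}
    (h1 : T.Adj x y₁) (h2 : T.Adj x y₂)
    (hd1 : T.dist v y₁ + 1 = T.dist v x) (hd2 : T.dist v y₂ + 1 = T.dist v x) :
    y₁ = y₂ := by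
  classical
  obtain ⟨q1, hq1, hl1⟩ := hT.isConnected.exists_path_of_dist v y₁
  obtain ⟨q2, hq2, hl2⟩ := hT.isConnected.exists_path_of_dist v y₂
  have hx1 : x ∉ q1.support := by
    intro hm
    have h3 : T.dist v x ≤ (q1.takeUntil x hm).length := SimpleGraph.dist_le _
    have := SimpleGraph.Walk.length_takeUntil_le q1 hm
    omega
  have hx2 : x ∉ q2.support := by
    intro hm
    have h3 : T.dist v x ≤ (q2.takeUntil x hm).length := SimpleGraph.dist_le _
    have := SimpleGraph.Walk.length_takeUntil_le q2 hm
    omega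
  have hW1 : (q1.concat h1.symm).IsPath := by
    rw [← SimpleGraph.Walk.isPath_reverse_iff, SimpleGraph.Walk.reverse_concat]
    exact hq1.reverse.cons (by simpa using hx1)
  have hW2 : (q2.concat h2.symm).IsPath := by
    rw [← SimpleGraph.Walk.isPath_reverse_iff, SimpleGraph.Walk.reverse_concat]
    exact hq2.reverse.cons (by simpa using hx2)
  have heq := (hT.existsUnique_path v x).unique hW1 hW2
  have := congrArg (fun w => w.reverse.getVert 1) heq
  simpa [SimpleGraph.Walk.reverse_concat, SimpleGraph.Walk.getVert_cons_succ] using this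

end Aux

/-- Delete a leaf `u` of a tree `T` and orient the rest away from `u`'s neighbor
`v`: the restriction of a branching `k`-path vertex cover `P` of `T` to the
remaining vertices is a branching `k`-path vertex cover of the resulting rooted
directed tree `H`. -/
theorem stmt7 {V : Type} [Fintype V] (T : SimpleGraph V) (hT : T.IsTree)
    (hn : 2 ≤ Nat.card V) (k : ℕ) (hk : 2 ≤ k)
    (u v : V) (hu : T.udeg u = 1) (huv : T.Adj u v)
    (H : RDForest {x : V // x ≠ u})
    (hH : ∀ x y : {x : V // x ≠ u},
      H.parent y = some x ↔ T.Adj x.1 y.1 ∧ T.dist v y.1 = T.dist v x.1 + 1)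
    (P : Set V) (hP : T.IsBPVC k P) :
    H.IsBPVC k {x : {x : V // x ≠ u} | x.1 ∈ P} := by
  classical
  -- u's only neighbor is v
  have hu_nbr : ∀ w, T.Adj u w → w = v := by
    intro w hw
    have h1 : ({w | T.Adj u w} : Set V).ncard = 1 := by
      rw [← Nat.card_coe_set_eq]; exact hu
    obtain ⟨a, ha⟩ := Set.ncard_eq_one.1 h1
    have hv : v ∈ ({a} : Set V) := by rw [← ha]; exact huv
    have hw' : w ∈ ({a} : Set V) := by rw [← ha]; exact hw
    simp only [Set.mem_singleton_iff] at hv hw'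
    rw [hw', hv]
  -- classification of neighbors
  have hclass : ∀ (x : {x : V // x ≠ u}) (a : V), T.Adj x.1 a →
      a = u ∨ (a ≠ u ∧ T.dist v a = T.dist v x.1 + 1) ∨
        (a ≠ u ∧ T.dist v a + 1 = T.dist v x.1) := by
    intro x a ha
    by_cases hau : a = u
    · exact Or.inl hau
    · rcases tree_adj_dist T hT v ha with h | h
      · exact Or.inr (Or.inl ⟨hau, h⟩)
      · exact Or.inr (Or.inr ⟨hau, h.symm⟩)
  -- a neighbor equal to u forces x = v
  have hxu : ∀ (x : {x : V // x ≠ u}), T.Adj x.1 u → x.1 = v :=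
    fun x ha => hu_nbr x.1 ha.symm
  -- key: at most one "non-child" neighbor; pairwise equality of non-children
  have hnc : ∀ (x : {x : V // x ≠ u}) (a b : V), T.Adj x.1 a → T.Adj x.1 b →
      (a = u ∨ T.dist v a + 1 = T.dist v x.1) →
      (b = u ∨ T.dist v b + 1 = T.dist v x.1) → a = b := by
    intro x a b ha hb hca hcb
    rcases hca with rfl | hda
    · rcases hcb with rfl | hdb
      · rfl
      · exfalso
        have hxv : x.1 = v := hxu x ha
        rw [hxv] at hdb
        simp [SimpleGraph.dist_self] at hdb
    · rcases hcb with rfl | hdb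
      · exfalso
        have hxv : x.1 = v := hxu x hb
        rw [hxv] at hda
        simp [SimpleGraph.dist_self] at hda
      · exact tree_uniq_closer T hT v ha hb hda hdb
  -- children of x correspond to neighbors that are ≠ u and farther
  have hchild : ∀ (x : {x : V // x ≠ u}),
      {w : {x : V // x ≠ u} | H.parent w = some x}
        = {w : {x : V // x ≠ u} | T.Adj x.1 w.1 ∧ T.dist v w.1 = T.dist v x.1 + 1} := by
    intro x; ext w; exact hH x w
  -- (L1): out-degree 0 implies udeg ≤ 1
  have L1 : ∀ x : {x : V // x ≠ u}, H.outDeg x = 0 → T.udeg x.1 ≤ 1 := by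
    intro x hx
    have hempty : {w : {x : V // x ≠ u} | H.parent w = some x} = ∅ := by
      have : ({w : {x : V // x ≠ u} | H.parent w = some x}).ncard = 0 := by
        rw [← Nat.card_coe_set_eq]; exact hx
      exact (Set.ncard_eq_zero (Set.toFinite _)).1 this
    rw [hchild x] at hempty
    -- every neighbor is u or closer
    have hall : ∀ a, T.Adj x.1 a → a = u ∨ T.dist v a + 1 = T.dist v x.1 := by
      intro a ha
      rcases hclass x a ha with h | ⟨hau, hfar⟩ | ⟨hau, hcl⟩
      · exact Or.inl h
      · exfalso
        have : (⟨a, hau⟩ : {x : V // x ≠ u}) ∈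
            {w : {x : V // x ≠ u} | T.Adj x.1 w.1 ∧ T.dist v w.1 = T.dist v x.1 + 1} :=
          ⟨ha, hfar⟩
        rw [hempty] at this; exact this
      · exact Or.inr hcl
    show SimpleGraph.udeg T x.1 ≤ 1
    rw [SimpleGraph.udeg, Nat.card_coe_set_eq]
    rw [Set.ncard_le_one (Set.toFinite _)]
    intro a ha b hb
    exact hnc x a b ha hb (hall a ha) (hall b hb)
  -- (L2): udeg ≥ 3 implies out-degree ≥ 2
  have L2 : ∀ x : {x : V // x ≠ u}, 3 ≤ T.udeg x.1 → 2 ≤ H.outDeg x := by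
    intro x hx
    set N : Set V := {w | T.Adj x.1 w} with hN
    set D : Set V := {w ∈ N | w ≠ u ∧ T.dist v w = T.dist v x.1 + 1} with hD
    have hEcard : (N \ D).ncard ≤ 1 := by
      rw [Set.ncard_le_one (Set.toFinite _)]
      rintro a ⟨haN, haD⟩ b ⟨hbN, hbD⟩
      have hca : a = u ∨ T.dist v a + 1 = T.dist v x.1 := by
        rcases hclass x a haN with h | ⟨hau, hfar⟩ | ⟨_, hcl⟩
        · exact Or.inl h
        · exact absurd ⟨haN, hau, hfar⟩ haD
        · exact Or.inr hcl
      have hcb : b = u ∨ T.dist v b + 1 = T.dist v x.1 := by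
        rcases hclass x b hbN with h | ⟨hbu, hfar⟩ | ⟨_, hcl⟩
        · exact Or.inl h
        · exact absurd ⟨hbN, hbu, hfar⟩ hbD
        · exact Or.inr hcl
      exact hnc x a b haN hbN hca hcb
    have hNcard : 3 ≤ N.ncard := by
      rw [hN, ← Nat.card_coe_set_eq]; exact hx
    have hsub : N ⊆ D ∪ (N \ D) := by
      intro a ha
      by_cases h : a ∈ D
      · exact Or.inl h
      · exact Or.inr ⟨ha, h⟩
    have hle : N.ncard ≤ D.ncard + (N \ D).ncard :=
      le_trans (Set.ncard_le_ncard hsub (Set.toFinite _)) (Set.ncard_union_le _ _)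
    have hDcard : 2 ≤ D.ncard := by omega
    obtain ⟨a, b, ha, hb, hab⟩ := (Set.one_lt_ncard_iff (s := D) (Set.toFinite _)).1 (by omega)
    show 2 ≤ H.outDeg x
    rw [RDForest.outDeg, Nat.card_coe_set_eq, hchild x]
    rw [show (2 : ℕ) = 1 + 1 from rfl, Nat.add_one_le_iff]
    rw [Set.one_lt_ncard_iff (Set.toFinite _)]
    exact ⟨⟨a, ha.2.1⟩, ⟨b, hb.2.1⟩, ⟨ha.1, ha.2.2⟩, ⟨hb.1, hb.2.2⟩,
      by simpa [Subtype.ext_iff] using hab⟩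
  constructor
  · intro x hx
    exact hP.1 x.1 (L1 x hx)
  · intro p hp
    set q : ℕ → V := fun i => (p i).1 with hq
    have hstep : ∀ i, i + 1 < k →
        T.Adj (q i) (q (i + 1)) ∧ T.dist v (q (i + 1)) = T.dist v (q i) + 1 := by
      intro i hi
      exact (hH (p i) (p (i + 1))).1 (hp i hi)
    have hdist : ∀ i, i < k → T.dist v (q i) = T.dist v (q 0) + i := by
      intro i
      induction i with
      | zero => intro _; simp
      | succ n ih =>
        intro hn1
        have h1 := ih (by omega)
        have h2 := (hstep n (by omega)).2
        omega
    have hup : T.IsUPath k q := by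
      constructor
      · intro i hi; exact (hstep i hi).1
      · intro i j hi hj hij
        have h1 := hdist i hi
        have h2 := hdist j hj
        rw [hij] at h1
        omega
    rcases hP.2 q hup with ⟨i, hik, h3⟩ | ⟨i, hik, hmem⟩
    · exact Or.inl ⟨i, hik, L2 (p i) h3⟩
    · exact Or.inr ⟨i, hik, hmem⟩
end

section
/- Let F be a rooted directed forest with a branching k-path vertex cover P, and suppose F contains a directed path v_q, ..., v_1 (each v_{i+1} the parent of v_i) where v_1 is a leaf, none of v_1,...,v_q is a branching vertex, v_1 is the only vertex of the path in P, and v_q is a root or the parent of v_q is a non-branching vertex belonging to P. Let H be the rooted directed forest obtained by deleting v_1,...,v_q. Then P ∩ V(H) is a branching k-path vertex cover of H. -/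
/-- Deleting a maximal leaf-ending non-branching directed path `v 0, …, v (q-1)`
(where `v 0` is a leaf, `v 0` is the only path vertex in `P`, and the path ends at
a root or below a non-branching vertex of `P`) from a rooted directed forest
preserves the branching `k`-path vertex cover property of the restriction of `P`. -/
theorem stmt10 {V : Type} [Fintype V] (F : RDForest V) (k : ℕ) (hk : 2 ≤ k)
    (P : Set V) (hP : F.IsBPVC k P) (q : ℕ) (hq : 1 ≤ q) (v : ℕ → V)
    (hleaf : F.IsLeaf (v 0))
    (hchain : ∀ i, i + 1 < q → F.parent (v i) = some (v (i + 1)))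
    (hnb : ∀ i < q, ¬ F.IsBranching (v i))
    (hv0 : v 0 ∈ P) (hvi : ∀ i, 0 < i → i < q → v i ∉ P)
    (hstop : F.parent (v (q - 1)) = none ∨
      ∃ u, F.parent (v (q - 1)) = some u ∧ ¬ F.IsBranching u ∧ u ∈ P)
    (S : Set V) (hS : S = {x | ∃ i < q, v i = x})
    (H : RDForest {x : V // x ∉ S})
    (hH : ∀ x y : {x : V // x ∉ S}, H.parent y = some x ↔ F.parent y.1 = some x.1) :
    H.IsBPVC k {x : {x : V // x ∉ S} | x.1 ∈ P} := by
  have key : ∀ (x : V), x ∉ S → ∀ w, w ∈ S →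
      F.parent w = some x → ¬ F.IsBranching x ∧ x ∈ P := by
    intro x hx w hwS hpw
    rw [hS] at hwS
    obtain ⟨i, hi, rfl⟩ := hwS
    by_cases h : i + 1 < q
    · exfalso
      apply hx
      rw [hS]
      exact ⟨i + 1, h, (Option.some_injective _ ((hchain i h).symm.trans hpw))⟩
    · have hiq : i = q - 1 := by omega
      subst hiq
      rcases hstop with h0 | ⟨u, hu, hub, huP⟩
      · rw [h0] at hpw; exact absurd hpw (by simp)
      · rw [hu] at hpw
        obtain rfl : u = x := Option.some_injective _ hpw
        exact ⟨hub, huP⟩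
  constructor
  · rintro ⟨x, hx⟩ hl
    by_cases hfl : F.IsLeaf x
    · exact hP.1 x hfl
    · have hne : Nonempty {w | F.parent w = some x} := by
        have h0 : F.outDeg x ≠ 0 := hfl
        exact (Nat.card_ne_zero.mp h0).1
      obtain ⟨w, hw⟩ := hne
      by_cases hwS : w ∈ S
      · exact (key x hx w hwS hw).2
      · exfalso
        have hne' : Nonempty {u : {y : V // y ∉ S} | H.parent u = some ⟨x, hx⟩} :=
          ⟨⟨⟨w, hwS⟩, (hH _ _).mpr hw⟩⟩
        exact Nat.card_ne_zero.mpr ⟨hne', inferInstance⟩ hl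
  · intro p hp
    have hp' : F.IsDPath k (fun i => (p i).1) := fun i hi => (hH _ _).mp (hp i hi)
    rcases hP.2 _ hp' with ⟨i, hi, hb⟩ | ⟨i, hi, hm⟩
    · left
      refine ⟨i, hi, ?_⟩
      have hnochild : ∀ w, F.parent w = some (p i).1 → w ∉ S := by
        intro w hw hwS
        exact (key _ (p i).2 w hwS hw).1 hb
      have e : {u : {y : V // y ∉ S} | H.parent u = some (p i)} ≃
          {w : V | F.parent w = some (p i).1} :=
        { toFun := fun u => ⟨u.1.1, (hH _ _).mp u.2⟩
          invFun := fun w => ⟨⟨w.1, hnochild w.1 w.2⟩, (hH _ _).mpr w.2⟩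
          left_inv := fun u => rfl
          right_inv := fun w => rfl }
      show 2 ≤ H.outDeg (p i)
      unfold RDForest.outDeg
      rw [Nat.card_congr e]
      exact hb
    · right; exact ⟨i, hi, hm⟩
end

section
/- Let F be a rooted directed forest with a branching k-path vertex cover P, let u be a branching vertex of F such that no directed path from u to a leaf contains a branching vertex other than u, and suppose every such path from u to a leaf has at most k+1 vertices. Let b ≥ 2 be the number of leaves reachable from u, and let H be the forest obtained by deleting all vertices strictly below u. Then Q = (P ∩ V(H)) ∪ {u} is a branching k-path vertex cover of H, |P| ≥ |Q| + b − 1, and H has at least n − bk vertices where n = |V(F)|. -/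
/-!
Every strict descendant `x` of `u` lies on the path from `u` to some leaf below `x`, and each
such path has at most `k` vertices besides `u`; so the deleted part has at most `b k` vertices.
The `b` leaves below `u` are strict descendants of `u` (as `u` branches) and lie in `P`, so they
are all lost when passing to `P ∩ V(H)`, while only `u` is added. Finally `H` differs from `F`
only below `u`, so every vertex of `H` other than `u` keeps its out-degree, and the only new leaf
`u` is covered by `Q`.
-/

theorem Relation.ReflTransGen.exists_seq {α : Type*} {r : α → α → Prop} {a b : α}
    (h : Relation.ReflTransGen r a b) :
    ∃ m, ∃ p : ℕ → α, p 0 = a ∧ p m = b ∧ ∀ i < m, r (p i) (p (i + 1)) := by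
  induction h with
  | refl => exact ⟨0, fun _ => a, rfl, rfl, by omega⟩
  | @tail _ d _ hcd ih =>
    obtain ⟨m, p, h0, hm, hp⟩ := ih
    refine ⟨m + 1, fun i => if i ≤ m then p i else d, by simp [h0], by simp, fun i hi => ?_⟩
    rcases Nat.lt_succ_iff_lt_or_eq.mp hi with hi | rfl
    · simpa [hi.le, Nat.succ_le_of_lt hi] using hp i hi
    · simpa [hm] using hcd

namespace RDForest

variable {V : Type} (F : RDForest V)

abbrev Edge (a c : V) : Prop := F.parent c = some a

variable {F} in
theorem IsBranching.not_isLeaf {v : V} (h : F.IsBranching v) : ¬ F.IsLeaf v := by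
  unfold IsBranching at h
  unfold IsLeaf
  omega

theorem wellFounded_flip_transGen [Finite V] :
    WellFounded (flip (Relation.TransGen F.Edge)) := by
  have : IsTrans V (flip (Relation.TransGen F.Edge)) := ⟨fun _ _ _ h₁ h₂ => h₂.trans h₁⟩
  have : Std.Irrefl (flip (Relation.TransGen F.Edge)) := ⟨F.acyclic⟩
  exact Finite.wellFounded_of_trans_of_irrefl _

theorem exists_leaf [Finite V] (x : V) :
    ∃ l, Relation.ReflTransGen F.Edge x l ∧ F.IsLeaf l := by
  induction x using F.wellFounded_flip_transGen.induction with
  | _ x ih =>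
    by_cases hx : F.IsLeaf x
    · exact ⟨x, .refl, hx⟩
    · obtain ⟨y, hy⟩ : Nonempty {w | F.parent w = some x} := (Nat.card_ne_zero.mp hx).1
      obtain ⟨l, hyl, hl⟩ := ih y (.single hy)
      exact ⟨l, .head hy hyl, hl⟩

theorem not_transGen_of_edge {u v w : V} (hv : ¬ Relation.TransGen F.Edge u v) (hvu : v ≠ u)
    (hvw : F.Edge v w) : ¬ Relation.TransGen F.Edge u w := by
  intro huw
  obtain ⟨c, huc, hcw⟩ := Relation.TransGen.tail'_iff.mp huw
  obtain rfl : c = v := Option.some_injective _ (hcw.symm.trans hvw)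
  rcases Relation.reflTransGen_iff_eq_or_transGen.mp huc with rfl | huc
  · exact hvu rfl
  · exact hv huc

section Prune

variable {F} {u : V} {H : RDForest {x : V // ¬ Relation.TransGen F.Edge u x}}

theorem outDeg_eq_of_prune (hH : ∀ x y, H.parent y = some x ↔ F.parent y.1 = some x.1)
    {v : {x : V // ¬ Relation.TransGen F.Edge u x}} (hvu : v.1 ≠ u) :
    H.outDeg v = F.outDeg v.1 :=
  Nat.card_congr
    { toFun := fun w => ⟨w.1.1, (hH _ _).mp w.2⟩
      invFun := fun w => ⟨⟨w.1, F.not_transGen_of_edge v.2 hvu w.2⟩, (hH _ _).mpr w.2⟩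
      left_inv := fun _ => rfl
      right_inv := fun _ => rfl }

theorem isBPVC_prune (hH : ∀ x y, H.parent y = some x ↔ F.parent y.1 = some x.1)
    {k : ℕ} {P : Set V} (hP : F.IsBPVC k P) :
    H.IsBPVC k ({x | x.1 ∈ P} ∪ {⟨u, F.acyclic u⟩}) := by
  have mem_of_eq : ∀ v : {x : V // ¬ Relation.TransGen F.Edge u x}, v.1 = u →
      v ∈ ({x | x.1 ∈ P} ∪ {⟨u, F.acyclic u⟩} : Set _) :=
    fun v hv => Or.inr (Subtype.ext hv)
  refine ⟨fun v hv => ?_, fun p hp => ?_⟩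
  · by_cases hvu : v.1 = u
    · exact mem_of_eq v hvu
    · exact Or.inl (hP.1 _ (by rwa [IsLeaf, ← outDeg_eq_of_prune hH hvu]))
  · rcases hP.2 (fun i => (p i).1) (fun i hi => (hH _ _).mp (hp i hi)) with
      ⟨i, hi, hbr⟩ | ⟨i, hi, hmem⟩
    · by_cases hvu : (p i).1 = u
      · exact Or.inr ⟨i, hi, mem_of_eq _ hvu⟩
      · exact Or.inl ⟨i, hi, by rwa [IsBranching, outDeg_eq_of_prune hH hvu]⟩
    · exact Or.inr ⟨i, hi, Or.inl hmem⟩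

end Prune

theorem ncard_prune_add_le [Finite V] {k : ℕ} {P : Set V} (hP : F.IsBPVC k P) {u : V}
    (hu : ¬ F.IsLeaf u) :
    ({x | x.1 ∈ P} ∪ {⟨u, F.acyclic u⟩} :
      Set {x : V // ¬ Relation.TransGen F.Edge u x}).ncard
      + ({l | Relation.ReflTransGen F.Edge u l ∧ F.IsLeaf l}.ncard - 1) ≤ P.ncard := by
  set L := {l | Relation.ReflTransGen F.Edge u l ∧ F.IsLeaf l}
  have hLP : L ⊆ P := fun l hl => hP.1 l hl.2
  have hL : L.Nonempty := F.exists_leaf u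
  have hPL : ({x | x.1 ∈ P} : Set {x : V // ¬ Relation.TransGen F.Edge u x}).ncard
      ≤ (P \ L).ncard := by
    refine Set.ncard_le_ncard_of_injOn Subtype.val (fun x hx => ⟨hx, fun hxL => ?_⟩)
      Subtype.val_injective.injOn
    rcases Relation.reflTransGen_iff_eq_or_transGen.mp hxL.1 with hxu | hux
    · exact hu (hxu ▸ hxL.2)
    · exact x.2 hux
  have hunion := Set.ncard_union_le
    ({x | x.1 ∈ P} : Set {x : V // ¬ Relation.TransGen F.Edge u x}) {⟨u, F.acyclic u⟩}
  have hsplit := Set.ncard_sdiff_add_ncard_of_subset hLP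
  have hLpos := hL.ncard_pos
  rw [Set.ncard_singleton] at hunion
  omega

theorem mem_seq_or_reflTransGen_start {m : ℕ} {p : ℕ → V}
    (hp : ∀ i < m, F.Edge (p i) (p (i + 1))) {x : V}
    (hx : Relation.ReflTransGen F.Edge x (p m)) :
    (∃ i ≤ m, x = p i) ∨ Relation.ReflTransGen F.Edge x (p 0) := by
  induction hx using Relation.ReflTransGen.head_induction_on with
  | refl => exact Or.inl ⟨m, le_rfl, rfl⟩
  | @head x y hxy _ ih =>
    rcases ih with ⟨_ | i, hi, rfl⟩ | hy
    · exact Or.inr (.single hxy)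
    · exact Or.inl ⟨i, by omega, Option.some_injective _ (hxy.symm.trans (hp i (by omega)))⟩
    · exact Or.inr (.head hxy hy)

theorem ncard_transGen_reflTransGen_le {m : ℕ} {p : ℕ → V}
    (hp : ∀ i < m, F.Edge (p i) (p (i + 1))) :
    {x | Relation.TransGen F.Edge (p 0) x ∧ Relation.ReflTransGen F.Edge x (p m)}.ncard ≤ m := by
  calc _ ≤ (p '' Set.Icc 1 m).ncard := Set.ncard_le_ncard ?_ ((Set.finite_Icc 1 m).image p)
    _ ≤ (Set.Icc 1 m).ncard := Set.ncard_image_le (Set.finite_Icc 1 m)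
    _ = m := by simp
  rintro x ⟨h0x, hxm⟩
  rcases F.mem_seq_or_reflTransGen_start hp hxm with ⟨_ | i, hi, rfl⟩ | hx0
  · exact absurd h0x (F.acyclic _)
  · exact ⟨i + 1, ⟨by omega, hi⟩, rfl⟩
  · exact absurd (h0x.trans_left hx0) (F.acyclic _)

theorem ncard_transGen_le [Finite V] (u : V) (k : ℕ)
    (h : ∀ l, Relation.ReflTransGen F.Edge u l → F.IsLeaf l →
      {x | Relation.TransGen F.Edge u x ∧ Relation.ReflTransGen F.Edge x l}.ncard ≤ k) :
    {x | Relation.TransGen F.Edge u x}.ncard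
      ≤ {l | Relation.ReflTransGen F.Edge u l ∧ F.IsLeaf l}.ncard * k := by
  set L := {l | Relation.ReflTransGen F.Edge u l ∧ F.IsLeaf l}
  set S := fun l => {x | Relation.TransGen F.Edge u x ∧ Relation.ReflTransGen F.Edge x l}
  have hcover : {x | Relation.TransGen F.Edge u x} ⊆ ⋃ l ∈ L.toFinite.toFinset, S l := by
    intro x hux
    obtain ⟨l, hxl, hl⟩ := F.exists_leaf x
    exact Set.mem_biUnion (L.toFinite.mem_toFinset.mpr ⟨hux.to_reflTransGen.trans hxl, hl⟩)
      ⟨hux, hxl⟩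
  calc _ ≤ (⋃ l ∈ L.toFinite.toFinset, S l).ncard := Set.ncard_le_ncard hcover
    _ ≤ ∑ l ∈ L.toFinite.toFinset, (S l).ncard := Finset.set_ncard_biUnion_le _ _
    _ ≤ L.toFinite.toFinset.card • k := Finset.sum_le_card_nsmul _ _ _ fun l hl =>
        h l (L.toFinite.mem_toFinset.mp hl).1 (L.toFinite.mem_toFinset.mp hl).2
    _ = L.ncard * k := by rw [smul_eq_mul, Set.ncard_eq_toFinset_card L]

end RDForest

theorem stmt11_general {V : Type} [Fintype V] (F : RDForest V) (k : ℕ)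
    (P : Set V) (hP : F.IsBPVC k P) (u : V) (hu : F.IsBranching u)
    (hpaths : ∀ (m : ℕ) (p : ℕ → V), p 0 = u →
      (∀ i, i < m → F.parent (p (i + 1)) = some (p i)) → F.IsLeaf (p m) →
      m ≤ k ∧ ∀ i, 0 < i → i ≤ m → ¬ F.IsBranching (p i))
    (b : ℕ)
    (hb : b = Nat.card {x | Relation.ReflTransGen
      (fun a c => F.parent c = some a) u x ∧ F.IsLeaf x})
    (H : RDForest {x : V // ¬ Relation.TransGen (fun a c => F.parent c = some a) u x})
    (hH : ∀ x y : {x : V // ¬ Relation.TransGen (fun a c => F.parent c = some a) u x},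
      H.parent y = some x ↔ F.parent y.1 = some x.1) :
    H.IsBPVC k ({x | x.1 ∈ P} ∪ {⟨u, F.acyclic u⟩}) ∧
    ({x | x.1 ∈ P} ∪ {⟨u, F.acyclic u⟩} :
      Set {x : V // ¬ Relation.TransGen (fun a c => F.parent c = some a) u x}).ncard
      + (b - 1) ≤ P.ncard ∧
    Nat.card V - b * k ≤
      Nat.card {x : V // ¬ Relation.TransGen (fun a c => F.parent c = some a) u x} := by
  have hbL : b = {l | Relation.ReflTransGen F.Edge u l ∧ F.IsLeaf l}.ncard :=
    hb.trans (Nat.card_coe_set_eq _)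
  refine ⟨RDForest.isBPVC_prune hH hP, hbL ▸ F.ncard_prune_add_le hP hu.not_isLeaf, ?_⟩
  have hdeleted : {x | Relation.TransGen F.Edge u x}.ncard ≤ b * k := by
    rw [hbL]
    refine F.ncard_transGen_le u k fun l hul hl => ?_
    obtain ⟨m, p, rfl, rfl, hp⟩ := hul.exists_seq
    exact (F.ncard_transGen_reflTransGen_le hp).trans (hpaths m p rfl hp hl).1
  suffices Nat.card V - b * k ≤ {x | Relation.TransGen F.Edge u x}ᶜ.ncard from
    this.trans_eq (Nat.card_coe_set_eq _).symm
  have hsplit := Set.ncard_add_ncard_compl {x | Relation.TransGen F.Edge u x}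
  omega

/-- Deleting all strict descendants of a deepest branching vertex `u` (all of whose
paths to leaves contain no other branching vertex and have at most `k+1` vertices):
`Q = (P ∩ V(H)) ∪ {u}` is a branching `k`-path vertex cover of the resulting forest
`H`, `|P| ≥ |Q| + b - 1` where `b ≥ 2` is the number of leaves below `u`, and `H`
has at least `n - bk` vertices. -/
theorem stmt11 {V : Type} [Fintype V] (F : RDForest V) (k : ℕ) (hk : 2 ≤ k)
    (P : Set V) (hP : F.IsBPVC k P) (u : V) (hu : F.IsBranching u)
    (hpaths : ∀ (m : ℕ) (p : ℕ → V), p 0 = u →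
      (∀ i, i < m → F.parent (p (i + 1)) = some (p i)) → F.IsLeaf (p m) →
      m ≤ k ∧ ∀ i, 0 < i → i ≤ m → ¬ F.IsBranching (p i))
    (b : ℕ)
    (hb : b = Nat.card {x | Relation.ReflTransGen
      (fun a c => F.parent c = some a) u x ∧ F.IsLeaf x})
    (hb2 : 2 ≤ b)
    (H : RDForest {x : V // ¬ Relation.TransGen (fun a c => F.parent c = some a) u x})
    (hH : ∀ x y : {x : V // ¬ Relation.TransGen (fun a c => F.parent c = some a) u x},
      H.parent y = some x ↔ F.parent y.1 = some x.1) :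
    H.IsBPVC k ({x | x.1 ∈ P} ∪ {⟨u, F.acyclic u⟩}) ∧
    ({x | x.1 ∈ P} ∪ {⟨u, F.acyclic u⟩} :
      Set {x : V // ¬ Relation.TransGen (fun a c => F.parent c = some a) u x}).ncard
      + (b - 1) ≤ P.ncard ∧
    Nat.card V - b * k ≤
      Nat.card {x : V // ¬ Relation.TransGen (fun a c => F.parent c = some a) u x} :=
  stmt11_general F k P hP u hu hpaths b hb H hH
end

section
/- In the rooted directed forests F_i defined by F_1 being a directed path on k vertices and F_{i+1} being a directed path on 2k vertices with an arc from its k-th vertex to the root of a copy of F_i, every directed path on k vertices contains either a leaf or a branching vertex; hence the set of leaves is a branching k-path vertex cover of F_i. -/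
/-- A parent map admitting a strictly decreasing measure is acyclic. -/
theorem acyclic_of_measure {V : Type} (parent : V → Option V) (f : V → ℕ)
    (hlt : ∀ a b, parent b = some a → f a < f b) :
    ∀ v : V, ¬ Relation.TransGen (fun a b => parent b = some a) v v := by
  have key : ∀ a b : V, Relation.TransGen (fun a b => parent b = some a) a b → f a < f b := by
    intro a b hab
    induction hab with
    | single h => exact hlt _ _ h
    | tail _ h ih => exact ih.trans (hlt _ _ h)
  exact fun v hv => lt_irrefl _ (key v v hv)

/-- Parent map of the extremal forests `F_i`: vertex `0` is the root; a vertex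
whose index is a positive multiple of `2k` (the root of the attached copy of
`F_{i-1}`) has parent `m - (k+1)` (the `k`-th vertex of the previous path);
every other positive vertex has parent `m - 1`. -/
def spParent (k n : ℕ) (m : Fin n) : Option (Fin n) :=
  if m.1 = 0 then none
  else if m.1 % (2 * k) = 0 then
    some ⟨m.1 - (k + 1), lt_of_le_of_lt (Nat.sub_le _ _) m.isLt⟩
  else some ⟨m.1 - 1, lt_of_le_of_lt (Nat.sub_le _ _) m.isLt⟩

/-- The extremal rooted directed forest `F_i`: `F_1` is a directed path on `k`
vertices, and `F_{i+1}` is a directed path on `2k` vertices whose `k`-th vertex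
has an additional arc to the root of a disjoint copy of `F_i`. -/
def specialForest (k i : ℕ) : RDForest (Fin (k * (2 * i - 1))) where
  parent := spParent k _
  acyclic := acyclic_of_measure _ Fin.val (by
    intro a b h
    unfold spParent at h
    split at h
    · exact absurd h (by simp)
    · split at h
      · cases h
        exact Nat.sub_lt (Nat.pos_of_ne_zero (by assumption)) (Nat.succ_pos _)
      · cases h
        exact Nat.sub_lt (Nat.pos_of_ne_zero (by assumption)) Nat.one_pos)


section Aux

lemma spParent_eq_some {k n : ℕ} {w u : Fin n} :
    spParent k n w = some u ↔
      w.1 ≠ 0 ∧ ((w.1 % (2*k) = 0 ∧ u.1 = w.1 - (k+1)) ∨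
        (¬ w.1 % (2*k) = 0 ∧ u.1 = w.1 - 1)) := by
  unfold spParent
  split
  · simp_all
  · split <;> simp_all [Fin.ext_iff, eq_comm]

lemma sp_outDeg (k i : ℕ) (u : Fin (k * (2*i-1))) :
    (specialForest k i).outDeg u =
      Nat.card {w : Fin (k * (2*i-1)) | spParent k (k*(2*i-1)) w = some u} := rfl

/-- Lemma A: branching. -/
lemma sp_branching {k i : ℕ} (hk : 2 ≤ k) (u : Fin (k * (2*i-1)))
    (hu : u.1 % (2*k) = k - 1) (hlt : u.1 + k + 1 < k * (2*i-1)) :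
    (specialForest k i).IsBranching u := by
  rw [RDForest.IsBranching, sp_outDeg, Nat.card_coe_set_eq]
  refine (Set.one_lt_ncard_iff (Set.toFinite _)).2 ?_
  have hmod1 : (u.1 + 1) % (2*k) = k := by
    rw [Nat.add_mod, hu, Nat.mod_eq_of_lt (show 1 < 2*k by omega),
      show k - 1 + 1 = k from by omega, Nat.mod_eq_of_lt (by omega)]
  have hmod2 : (u.1 + (k + 1)) % (2*k) = 0 := by
    rw [Nat.add_mod, hu, Nat.mod_eq_of_lt (show k+1 < 2*k by omega),
      show k - 1 + (k+1) = 2*k from by omega]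
    simp
  refine ⟨⟨u.1 + 1, by omega⟩, ⟨u.1 + (k + 1), by omega⟩, ?_, ?_, ?_⟩
  · rw [Set.mem_setOf_eq, spParent_eq_some]
    simp only [Fin.val_mk]
    exact ⟨by omega, Or.inr ⟨by omega, by omega⟩⟩
  · rw [Set.mem_setOf_eq, spParent_eq_some]
    simp only [Fin.val_mk]
    exact ⟨by omega, Or.inl ⟨hmod2, by omega⟩⟩
  · simp only [ne_eq, Fin.mk.injEq]
    omega

/-- Lemma B: leaf when residue is `2k - 1`. -/
lemma sp_leaf_high {k i : ℕ} (hk : 2 ≤ k) (u : Fin (k * (2*i-1)))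
    (hu : u.1 % (2*k) = 2*k - 1) :
    (specialForest k i).IsLeaf u := by
  have hub : 2*k - 1 ≤ u.1 := hu ▸ Nat.mod_le _ _
  rw [RDForest.IsLeaf, sp_outDeg]
  convert Nat.card_of_isEmpty
  rw [Set.isEmpty_coe_sort, Set.eq_empty_iff_forall_notMem]
  intro w hw
  rw [Set.mem_setOf_eq, spParent_eq_some] at hw
  obtain ⟨hw0, hw1 | hw1⟩ := hw
  · -- jump child: w = u + (k+1), residue k ≠ 0, contradiction
    have hwval : w.1 = u.1 + (k + 1) := by omega
    have : w.1 % (2*k) = k := by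
      rw [hwval, Nat.add_mod, hu, Nat.mod_eq_of_lt (show k+1 < 2*k by omega),
        show 2*k - 1 + (k+1) = k + 2*k from by omega, Nat.add_mod_right,
        Nat.mod_eq_of_lt (by omega)]
    omega
  · -- +1 child: w = u + 1, residue 0, contradiction
    have hwval : w.1 = u.1 + 1 := by omega
    have : w.1 % (2*k) = 0 := by
      rw [hwval, Nat.add_mod, hu, Nat.mod_eq_of_lt (show 1 < 2*k by omega),
        show 2*k - 1 + 1 = 2*k from by omega]
      simp
    omega

/-- Lemma C: the last vertex is a leaf. -/
lemma sp_leaf_last {k i : ℕ} (hk : 2 ≤ k) (hi : 1 ≤ i) (u : Fin (k * (2*i-1)))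
    (hu : u.1 % (2*k) = k - 1) (hge : ¬ u.1 + k + 1 < k * (2*i-1)) :
    (specialForest k i).IsLeaf u := by
  obtain ⟨i', rfl⟩ : ∃ i', i = i' + 1 := ⟨i - 1, by omega⟩
  have hnval : k * (2*(i'+1)-1) = k + 2*k*i' := by
    rw [show 2*(i'+1)-1 = 2*i'+1 from by omega]; ring
  have hnmod : (k * (2*(i'+1)-1) - 1) % (2*k) = k - 1 := by
    rw [show k * (2*(i'+1)-1) - 1 = (k-1) + 2*k*i' from by omega, Nat.add_mul_mod_self_left,
      Nat.mod_eq_of_lt (by omega)]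
  have hule : u.1 < k * (2*(i'+1)-1) := u.isLt
  have key : ∀ x y : ℕ, 2*k*x + 2*k ≤ 2*k*y ∨ 2*k*y ≤ 2*k*x := by
    intro x y
    rcases Nat.lt_or_ge x y with h | h
    · left
      calc 2*k*x + 2*k = 2*k*(x+1) := by ring
        _ ≤ 2*k*y := Nat.mul_le_mul_left _ h
    · right; exact Nat.mul_le_mul_left _ h
  have h1 := Nat.div_add_mod u.1 (2*k)
  have h2 := Nat.div_add_mod (k * (2*(i'+1)-1) - 1) (2*k)
  rw [hu] at h1
  rw [hnmod] at h2
  have hd := key (u.1 / (2*k)) ((k * (2*(i'+1)-1) - 1) / (2*k))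
  have huval : u.1 = k * (2*(i'+1)-1) - 1 := by omega
  rw [RDForest.IsLeaf, sp_outDeg]
  convert Nat.card_of_isEmpty
  rw [Set.isEmpty_coe_sort, Set.eq_empty_iff_forall_notMem]
  intro w hw
  rw [Set.mem_setOf_eq, spParent_eq_some] at hw
  have hwlt : w.1 < k * (2*(i'+1)-1) := w.isLt
  obtain ⟨hw0, hw1 | hw1⟩ := hw <;> omega

/-- Main combinatorial lemma: every directed `k`-path in the extremal forest
contains a leaf or a branching vertex. -/
lemma sp_main (k i : ℕ) (hk : 2 ≤ k) (hi : 1 ≤ i) :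
    ∀ p : ℕ → Fin (k * (2 * i - 1)), (specialForest k i).IsDPath k p →
      ∃ j < k, (specialForest k i).IsLeaf (p j) ∨ (specialForest k i).IsBranching (p j) := by
  intro p hp
  have hstep : ∀ j, j + 1 < k → spParent k (k * (2*i-1)) (p (j+1)) = some (p j) := hp
  by_cases hx : ∃ j, j + 1 < k ∧ (p (j+1)).1 % (2*k) = 0
  · -- some step is a jump: p j is branching
    obtain ⟨j, hjk, hj0⟩ := hx
    have h := hstep j hjk
    rw [spParent_eq_some] at h
    obtain ⟨hw0, h1 | h1⟩ := h
    swap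
    · exact absurd hj0 h1.1
    have hdvd : 2*k ∣ (p (j+1)).1 := Nat.dvd_of_mod_eq_zero hj0
    have hge : 2*k ≤ (p (j+1)).1 := Nat.le_of_dvd (by omega) hdvd
    obtain ⟨m, hm⟩ := hdvd
    have hm0 : m ≠ 0 := by rintro rfl; omega
    obtain ⟨m', rfl⟩ : ∃ m', m = m' + 1 := ⟨m - 1, by omega⟩
    have hm' : (p (j+1)).1 = 2*k*m' + 2*k := by rw [hm]; ring
    have hures : (p j).1 % (2*k) = k - 1 := by
      rw [show (p j).1 = (k - 1) + 2*k*m' from by omega, Nat.add_mul_mod_self_left,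
        Nat.mod_eq_of_lt (by omega)]
    have hult : (p j).1 + k + 1 < k * (2*i-1) := by
      have := (p (j+1)).isLt; omega
    exact ⟨j, by omega, Or.inr (sp_branching hk _ hures hult)⟩
  · -- all steps are +1 steps
    push_neg at hx
    have hchain : ∀ j, j < k → (p j).1 = (p 0).1 + j := by
      intro j
      induction j with
      | zero => simp
      | succ j ih =>
        intro hj
        have h := hstep j hj
        rw [spParent_eq_some] at h
        obtain ⟨hw0, h1 | h1⟩ := h
        · exact absurd h1.1 (hx j hj)
        · have := ih (by omega); omega
    have hrk : (p 0).1 % k < k := Nat.mod_lt _ (by omega)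
    refine ⟨k - 1 - (p 0).1 % k, by omega, ?_⟩
    set j := k - 1 - (p 0).1 % k with hj
    have huval : (p j).1 = (p 0).1 + j := hchain j (by omega)
    have humodk : (p j).1 % k = k - 1 := by
      rw [huval, Nat.add_mod, Nat.mod_eq_of_lt (show j < k by omega),
        show (p 0).1 % k + j = k - 1 from by omega, Nat.mod_eq_of_lt (by omega)]
    have hsk : (p j).1 % (2*k) % k = k - 1 := by
      rw [Nat.mod_mod_of_dvd _ ⟨2, by ring⟩]; exact humodk
    have hslt : (p j).1 % (2*k) < 2*k := Nat.mod_lt _ (by omega)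
    have hsdm := Nat.div_add_mod ((p j).1 % (2*k)) k
    rw [hsk] at hsdm
    obtain ⟨q, hq⟩ : ∃ q, (p j).1 % (2*k) / k = q := ⟨_, rfl⟩
    rw [hq] at hsdm
    have hq2 : q < 2 := by
      rcases Nat.lt_or_ge q 2 with h | h
      · exact h
      · exfalso
        have : k * 2 ≤ k * q := Nat.mul_le_mul_left _ h
        omega
    rcases (by omega : q = 0 ∨ q = 1) with rfl | rfl
    · -- residue k - 1
      have hsval : (p j).1 % (2*k) = k - 1 := by omega
      by_cases hlt : (p j).1 + k + 1 < k * (2*i-1)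
      · exact Or.inr (sp_branching hk _ hsval hlt)
      · exact Or.inl (sp_leaf_last hk hi _ hsval hlt)
    · -- residue 2k - 1
      have hsval : (p j).1 % (2*k) = 2*k - 1 := by omega
      exact Or.inl (sp_leaf_high hk _ hsval)

end Aux

/-- In the extremal forest `F_i`, every directed path on `k` vertices contains a leaf
or a branching vertex; hence the set of leaves is a branching `k`-path vertex cover. -/
theorem stmt13 (k i : ℕ) (hk : 2 ≤ k) (hi : 1 ≤ i) :
    (∀ p : ℕ → Fin (k * (2 * i - 1)), (specialForest k i).IsDPath k p →
      ∃ j < k, (specialForest k i).IsLeaf (p j) ∨ (specialForest k i).IsBranching (p j)) ∧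
    (specialForest k i).IsBPVC k {x | (specialForest k i).IsLeaf x} := by
  have main := sp_main k i hk hi
  refine ⟨main, ?_, ?_⟩
  · intro v hv
    exact hv
  · intro p hp
    obtain ⟨j, hjk, hcase⟩ := main p hp
    rcases hcase with h | h
    · exact Or.inr ⟨j, hjk, h⟩
    · exact Or.inl ⟨j, hjk, h⟩
end

section
/- Define undirected trees F_1, F_2, ... by: F_1 is a path on k+1 vertices; F_{i+1} is obtained from F_i by choosing a leaf u and attaching two new paths, each on k new vertices, to u by one edge each. Then F_i has exactly k(2i−1)+1 vertices and exactly i+1 leaves, and the set of all leaves of F_i is a branching k-path vertex cover of F_i of size i+1. -/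
/-- The extremal tree `F_i` for the undirected case: `F_1` is a path on `k+1`
vertices `0, 1, …, k`; `F_{j+1}` is obtained from `F_j` by attaching to its leaf
`(2j-1)k` two new paths on `k` new vertices each (consecutive-index paths, the
second one attached by the extra edge `{(2j-1)k, 2jk+1}`). -/
def specialTree (k i : ℕ) : SimpleGraph (Fin (k * (2 * i - 1) + 1)) :=
  SimpleGraph.fromRel (fun a b =>
    (b.1 = a.1 + 1 ∧ ¬(2 * k ≤ a.1 ∧ a.1 % (2 * k) = 0)) ∨
    (∃ j, 1 ≤ j ∧ j < i ∧ a.1 = (2 * j - 1) * k ∧ b.1 = 2 * j * k + 1))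

/-!
Every vertex `b > 0` of `F_i` has a parent `parent k b < b`: it is `b - 1`, except when
`b - 1 = 2jk` ends an arm, where it is the branching vertex `(2j-1)k`. Such a parent map makes
`F_i` a tree and exhibits the degrees: multiples of `k` have degree `1` (the leaves
`0, 2k, …, 2(i-1)k, (2i-1)k`) or `3`, all other vertices have degree `2`. A path on `k` vertices
avoiding leaves and branching vertices therefore moves through non-multiples of `k` in unit
steps; since it cannot turn back, it runs through `k` consecutive integers, one of which is a
multiple of `k`.
-/

namespace SimpleGraph

variable {V : Type} [Preorder V]

structure IsParentMap (G : SimpleGraph V) (r : V) (par : V → V) : Prop where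
  adj_iff : ∀ x y, G.Adj x y ↔ (y ≠ r ∧ x = par y) ∨ (x ≠ r ∧ y = par x)
  lt : ∀ v, v ≠ r → par v < v

namespace IsParentMap

variable {G : SimpleGraph V} {r : V} {par : V → V}

theorem adj_par (h : G.IsParentMap r par) {v : V} (hv : v ≠ r) : G.Adj (par v) v :=
  (h.adj_iff _ _).2 (.inl ⟨hv, rfl⟩)

theorem reachable [WellFoundedLT V] (h : G.IsParentMap r par) (v : V) : G.Reachable r v := by
  induction v using WellFoundedLT.induction with
  | _ v ih =>
    by_cases hv : v = r
    · exact hv ▸ .rfl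
    · exact (ih _ (h.lt v hv)).trans (h.adj_par hv).reachable

theorem connected [WellFoundedLT V] (h : G.IsParentMap r par) : G.Connected :=
  { preconnected := fun x y => (h.reachable x).symm.trans (h.reachable y)
    nonempty := ⟨r⟩ }

theorem bijective_edge (h : G.IsParentMap r par) :
    Function.Bijective fun v : {v // v ≠ r} =>
      (⟨s(par v, v), h.adj_par v.2⟩ : G.edgeSet) := by
  constructor
  · rintro ⟨v, hv⟩ ⟨w, hw⟩ hvw
    rcases Sym2.eq_iff.1 (congrArg Subtype.val hvw) with ⟨-, rfl⟩ | ⟨hpv, hpw⟩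
    · rfl
    · simp only at hpv hpw
      have hvw : v < w := hpw ▸ h.lt w hw
      have hwv : w < v := hpv ▸ h.lt v hv
      exact absurd hvw hwv.not_gt
  · rintro ⟨e, he⟩
    induction e using Sym2.ind with
    | _ x y =>
      rcases (h.adj_iff x y).1 he with ⟨hy, rfl⟩ | ⟨hx, rfl⟩
      · exact ⟨⟨y, hy⟩, rfl⟩
      · exact ⟨⟨x, hx⟩, Subtype.ext Sym2.eq_swap⟩

theorem isTree [Finite V] (h : G.IsParentMap r par) : G.IsTree := by
  classical
  have := Fintype.ofFinite V
  refine isTree_iff_connected_and_card.2 ⟨h.connected, ?_⟩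
  rw [← Nat.card_eq_of_bijective _ h.bijective_edge]
  have : Nonempty V := ⟨r⟩
  simp [Nat.card_eq_fintype_card, Fintype.card_subtype_compl, Nat.sub_add_cancel Fintype.card_pos]

end IsParentMap
end SimpleGraph

theorem Int.sub_eq_of_nonbacktracking_unit_steps {n : ℕ} {p : ℕ → ℤ}
    (hstep : ∀ j, j + 1 < n → p (j + 1) = p j + 1 ∨ p (j + 1) = p j - 1)
    (hback : ∀ j, j + 2 < n → p (j + 2) ≠ p j) :
    ∀ j, j + 1 < n → p (j + 1) - p j = p 1 - p 0 := by
  intro j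
  induction j with
  | zero => intro; rfl
  | succ j ih =>
    intro hj
    have hprev := ih (by omega)
    have hnot_back : p (j + 1 + 1) ≠ p j := hback j hj
    rcases hstep j (by omega) with h | h <;> rcases hstep (j + 1) hj with h' | h' <;> omega

theorem Int.eq_add_mul_of_nonbacktracking_unit_steps {n : ℕ} {p : ℕ → ℤ}
    (hstep : ∀ j, j + 1 < n → p (j + 1) = p j + 1 ∨ p (j + 1) = p j - 1)
    (hback : ∀ j, j + 2 < n → p (j + 2) ≠ p j) :
    ∀ j < n, p j = p 0 + j * (p 1 - p 0) := by
  intro j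
  induction j with
  | zero => intro; simp
  | succ j ih =>
    intro hj
    have hsucc := Int.sub_eq_of_nonbacktracking_unit_steps hstep hback j hj
    push_cast
    linear_combination hsucc + ih (by omega)

theorem Int.exists_dvd_of_nonbacktracking_unit_steps {n : ℕ} (hn : 0 < n) {p : ℕ → ℤ}
    (hstep : ∀ j, j + 1 < n → p (j + 1) = p j + 1 ∨ p (j + 1) = p j - 1)
    (hback : ∀ j, j + 2 < n → p (j + 2) ≠ p j) :
    ∃ j < n, (n : ℤ) ∣ p j := by
  obtain rfl | hn2 := (Nat.one_le_iff_ne_zero.2 hn.ne').eq_or_lt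
  · exact ⟨0, hn, by simp⟩
  set d := p 1 - p 0
  have hd : d * d = 1 := by rcases hstep 0 hn2 with h | h <;> simp [d, h]
  have hn' : (0 : ℤ) < n := by exact_mod_cast hn
  have hlt := Int.emod_lt_of_pos (-d * p 0) hn'
  have hnn := Int.emod_nonneg (-d * p 0) hn'.ne'
  refine ⟨((-d * p 0) % n).toNat, by omega, ?_⟩
  rw [Int.eq_add_mul_of_nonbacktracking_unit_steps hstep hback _ (by omega),
    Int.toNat_of_nonneg hnn, ← Int.modEq_zero_iff_dvd]
  calc p 0 + (-d * p 0) % n * d ≡ p 0 + (-d * p 0) * d [ZMOD n] :=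
        ((Int.mod_modEq _ _).mul_right _).add_left _
    _ = p 0 * (1 - d * d) := by ring
    _ = 0 := by rw [hd]; ring

theorem Set.ncard_setOf_eq_and {α : Type*} (a : α) (p : Prop) [Decidable p] :
    {b | b = a ∧ p}.ncard = if p then 1 else 0 := by
  by_cases hp : p <;> simp [hp]

theorem Set.finite_setOf_eq_and {α : Type*} (a : α) (p : Prop) : {b | b = a ∧ p}.Finite :=
  (Set.finite_singleton a).subset fun _ hb => hb.1

namespace SpecialTree

/-- `2jk` (`j ≥ 1`) ends the first arm attached at `(2j-1)k`; it is not joined to `2jk + 1`,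
which hangs from `(2j-1)k` instead. -/
def IsArmEnd (k a : ℕ) : Prop := 2 * k ≤ a ∧ a % (2 * k) = 0

instance (k : ℕ) : DecidablePred (IsArmEnd k) := fun _ => inferInstanceAs (Decidable (_ ∧ _))

def parent (k a : ℕ) : ℕ := if IsArmEnd k (a - 1) then a - 1 - k else a - 1

theorem parent_le (k a : ℕ) : parent k a ≤ a := by
  unfold parent; split_ifs <;> omega

variable {k i : ℕ}

theorem parent_lt {a : ℕ} (ha : 0 < a) : parent k a < a := by
  unfold parent; split_ifs <;> omega

theorem isArmEnd_iff {a : ℕ} (hk : 0 < k) : IsArmEnd k a ↔ ∃ j, 0 < j ∧ a = 2 * j * k := by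
  constructor
  · rintro ⟨hle, hmod⟩
    obtain ⟨j, rfl⟩ := Nat.dvd_of_mod_eq_zero hmod
    refine ⟨j, Nat.pos_of_ne_zero ?_, by ring⟩
    rintro rfl
    omega
  · rintro ⟨j, hj, rfl⟩
    exact ⟨by nlinarith, by rw [mul_right_comm]; exact Nat.mul_mod_right _ _⟩

theorem dvd_of_isArmEnd {a : ℕ} (h : IsArmEnd k a) : k ∣ a :=
  (Dvd.intro_left 2 rfl).trans (Nat.dvd_of_mod_eq_zero h.2)

theorem isArmEnd_mul_iff (hk : 0 < k) {q : ℕ} : IsArmEnd k (k * q) ↔ q % 2 = 0 ∧ 0 < q := by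
  rw [IsArmEnd, mul_comm 2 k, Nat.mul_mod_mul_left, Nat.mul_le_mul_left_iff hk,
    Nat.mul_eq_zero]
  omega

theorem parent_eq_iff {a c : ℕ} (hc : 0 < c) :
    parent k c = a ↔
      (c = a + 1 ∧ ¬IsArmEnd k a) ∨ (c = a + k + 1 ∧ IsArmEnd k (a + k)) := by
  unfold parent
  split_ifs with h
  · have := h.1
    constructor
    · intro hca
      right
      refine ⟨by omega, ?_⟩
      rwa [show a + k = c - 1 by omega]
    · rintro (⟨rfl, ha⟩ | ⟨rfl, -⟩)
      · exact absurd h ha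
      · omega
  · constructor
    · intro hca
      left
      refine ⟨by omega, ?_⟩
      rwa [← hca]
    · rintro (⟨rfl, -⟩ | ⟨rfl, ha⟩)
      · rfl
      · exact absurd ha h

theorem eq_succ_of_parent_eq {a c : ℕ} (hc : 0 < c) (h : parent k c = a) (ha : a % k ≠ 0) :
    c = a + 1 := by
  rcases (parent_eq_iff hc).1 h with ⟨rfl, -⟩ | ⟨-, harm⟩
  · rfl
  · have hdvd : k ∣ a := (Nat.dvd_add_left (dvd_refl k)).1 (dvd_of_isArmEnd harm)
    exact absurd (Nat.mod_eq_zero_of_dvd hdvd) ha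

theorem edgeRel_iff (hk : 0 < k) {a b : ℕ} (hb : b ≤ k * (2 * i - 1)) :
    ((b = a + 1 ∧ ¬(2 * k ≤ a ∧ a % (2 * k) = 0)) ∨
      (∃ j, 1 ≤ j ∧ j < i ∧ a = (2 * j - 1) * k ∧ b = 2 * j * k + 1)) ↔
    0 < b ∧ parent k b = a := by
  have hN : k * (2 * i - 1) = 2 * i * k - k := by rw [mul_comm, Nat.sub_one_mul]
  have attach_iff : (∃ j, 1 ≤ j ∧ j < i ∧ a = (2 * j - 1) * k ∧ b = 2 * j * k + 1) ↔
      b = a + k + 1 ∧ IsArmEnd k (a + k) := by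
    rw [isArmEnd_iff hk]
    constructor
    · rintro ⟨j, hj, -, rfl, rfl⟩
      have := Nat.le_mul_of_pos_left k (show 0 < 2 * j by omega)
      refine ⟨?_, j, hj, ?_⟩ <;> rw [Nat.sub_one_mul] <;> omega
    · rintro ⟨rfl, j, hj, hjk⟩
      have hji : j < i := by
        by_contra! hij
        have := Nat.mul_le_mul_right k (Nat.mul_le_mul_left 2 hij)
        omega
      exact ⟨j, hj, hji, by rw [Nat.sub_one_mul]; omega, by omega⟩
  rw [attach_iff]
  constructor
  · intro h
    have hb0 : 0 < b := by omega
    exact ⟨hb0, (parent_eq_iff hb0).2 h⟩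
  · rintro ⟨hb0, h⟩
    exact (parent_eq_iff hb0).1 h

theorem adj_iff (hk : 0 < k) {x y : Fin (k * (2 * i - 1) + 1)} :
    (specialTree k i).Adj x y ↔
      (0 < y.1 ∧ parent k y = x) ∨ (0 < x.1 ∧ parent k x = y) := by
  rw [specialTree, SimpleGraph.fromRel_adj, edgeRel_iff hk (Nat.lt_succ_iff.1 y.2),
    edgeRel_iff hk (Nat.lt_succ_iff.1 x.2), and_iff_right_iff_imp]
  rintro (⟨hy, hxy⟩ | ⟨hx, hyx⟩) rfl
  · exact (parent_lt hy).ne hxy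
  · exact (parent_lt hx).ne hyx

theorem isParentMap (hk : 0 < k) :
    (specialTree k i).IsParentMap 0 fun x => ⟨parent k x, (parent_le k x).trans_lt x.2⟩ where
  adj_iff x y := by
    simp only [adj_iff hk, Fin.ext_iff, Fin.val_zero, ne_eq, eq_comm, Nat.pos_iff_ne_zero]
  lt v hv := parent_lt (Nat.pos_of_ne_zero (Fin.val_ne_of_ne hv))

theorem image_val_setOf_adj (hk : 0 < k) (x : Fin (k * (2 * i - 1) + 1)) :
    Fin.val '' {w | (specialTree k i).Adj x w} =
      {b | b = parent k x ∧ 0 < x.1} ∪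
        {b | b = x + 1 ∧ (x.1 < k * (2 * i - 1) ∧ ¬IsArmEnd k x)} ∪
        {b | b = x + k + 1 ∧ (x.1 + k < k * (2 * i - 1) ∧ IsArmEnd k (x + k))} := by
  have hxN := x.2
  have hpx := parent_le k x
  ext b
  simp only [Set.mem_image, Set.mem_ofPred_eq, Set.mem_union, adj_iff hk]
  constructor
  · rintro ⟨w, ⟨hw0, hwx⟩ | ⟨hx0, hxw⟩, rfl⟩
    · have hwN := w.2
      rcases (parent_eq_iff hw0).1 hwx with ⟨hw, h⟩ | ⟨hw, h⟩
      · exact .inl (.inr ⟨hw, by omega, h⟩)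
      · exact .inr ⟨hw, by omega, h⟩
    · exact .inl (.inl ⟨hxw.symm, hx0⟩)
  · rintro ((⟨rfl, hx0⟩ | ⟨rfl, hx, h⟩) | ⟨rfl, hx, h⟩)
    · exact ⟨⟨parent k x, by omega⟩, .inr ⟨hx0, rfl⟩, rfl⟩
    · exact ⟨⟨x.1 + 1, by omega⟩,
        .inl ⟨Nat.succ_pos _, (parent_eq_iff (Nat.succ_pos _)).2 (.inl ⟨rfl, h⟩)⟩, rfl⟩
    · exact ⟨⟨x.1 + k + 1, by omega⟩,
        .inl ⟨Nat.succ_pos _, (parent_eq_iff (Nat.succ_pos _)).2 (.inr ⟨rfl, h⟩)⟩, rfl⟩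

theorem udeg_eq (hk : 0 < k) (x : Fin (k * (2 * i - 1) + 1)) :
    (specialTree k i).udeg x =
      (if 0 < x.1 then 1 else 0) + (if x.1 < k * (2 * i - 1) ∧ ¬IsArmEnd k x then 1 else 0) +
        (if x.1 + k < k * (2 * i - 1) ∧ IsArmEnd k (x + k) then 1 else 0) := by
  have hpx := parent_le k x
  have disj : ∀ {a c : ℕ} {p q : Prop}, a ≠ c →
      Disjoint {b | b = a ∧ p} {b | b = c ∧ q} :=
    fun hac => Set.disjoint_left.2 fun _ hb hb' => hac (hb.1.symm.trans hb'.1)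
  rw [SimpleGraph.udeg, Nat.card_coe_set_eq, ← Set.ncard_image_of_injective _ Fin.val_injective,
    image_val_setOf_adj hk,
    Set.ncard_union_eq (Set.disjoint_union_left.2 ⟨disj (by omega), disj (by omega)⟩)
      ((Set.finite_setOf_eq_and _ _).union (Set.finite_setOf_eq_and _ _))
      (Set.finite_setOf_eq_and _ _),
    Set.ncard_union_eq (disj (by omega)) (Set.finite_setOf_eq_and _ _)
      (Set.finite_setOf_eq_and _ _),
    Set.ncard_setOf_eq_and, Set.ncard_setOf_eq_and, Set.ncard_setOf_eq_and]

theorem udeg_of_mod_ne_zero (hk : 0 < k) {x : Fin (k * (2 * i - 1) + 1)} (hx : x.1 % k ≠ 0) :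
    (specialTree k i).udeg x = 2 := by
  have hx0 : 0 < x.1 := Nat.pos_of_ne_zero fun h => hx (by simp [h])
  have hxN : x.1 < k * (2 * i - 1) := by
    have : x.1 ≠ k * (2 * i - 1) := fun h => hx (by simp [h])
    omega
  have harm : ∀ {a}, a % k ≠ 0 → ¬IsArmEnd k a := fun ha h =>
    ha (Nat.mod_eq_zero_of_dvd (dvd_of_isArmEnd h))
  rw [udeg_eq hk, if_pos hx0, if_pos ⟨hxN, harm hx⟩,
    if_neg fun h => harm (by simpa using hx) h.2]

theorem udeg_of_eq_mul (hk : 0 < k) (hi : 1 ≤ i) {x : Fin (k * (2 * i - 1) + 1)} {q : ℕ}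
    (hx : x.1 = k * q) :
    (specialTree k i).udeg x = if q % 2 = 1 ∧ q + 2 < 2 * i then 3 else 1 := by
  simp only [udeg_eq hk, hx, ← Nat.mul_add_one, isArmEnd_mul_iff hk,
    Nat.mul_lt_mul_left hk, Nat.mul_pos_iff_of_pos_left hk]
  split_ifs <;> omega

theorem udeg_eq_two_iff (hk : 0 < k) (hi : 1 ≤ i) (x : Fin (k * (2 * i - 1) + 1)) :
    (specialTree k i).udeg x = 2 ↔ x.1 % k ≠ 0 := by
  refine ⟨fun h hx => ?_, udeg_of_mod_ne_zero hk⟩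
  obtain ⟨q, hq⟩ := Nat.dvd_of_mod_eq_zero hx
  rw [udeg_of_eq_mul hk hi hq] at h
  split_ifs at h <;> omega

def leaf (k i : ℕ) (j : Fin (i + 1)) : Fin (k * (2 * i - 1) + 1) :=
  ⟨k * min (2 * (j : ℕ)) (2 * i - 1),
    Nat.lt_succ_of_le (Nat.mul_le_mul_left k (min_le_right _ _))⟩

theorem leaf_injective (hk : 0 < k) : Function.Injective (leaf k i) := by
  intro a b hab
  have := Nat.eq_of_mul_eq_mul_left hk (congrArg Fin.val hab)
  have := a.2
  have := b.2
  ext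
  omega

theorem setOf_udeg_le_one_eq_range (hk : 0 < k) (hi : 1 ≤ i) :
    {x | (specialTree k i).udeg x ≤ 1} = Set.range (leaf k i) := by
  ext x
  simp only [Set.mem_ofPred_eq, Set.mem_range, Fin.ext_iff, leaf]
  by_cases hx : x.1 % k = 0
  · obtain ⟨q, hq⟩ := Nat.dvd_of_mod_eq_zero hx
    have hqi : q ≤ 2 * i - 1 := Nat.le_of_mul_le_mul_left (hq ▸ Nat.lt_succ_iff.1 x.2) hk
    simp only [udeg_of_eq_mul hk hi hq, hq, mul_right_inj' hk.ne']
    constructor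
    · intro h
      refine ⟨⟨(q + 1) / 2, by omega⟩, ?_⟩
      dsimp only
      split_ifs at h <;> omega
    · rintro ⟨j, hj⟩
      have := j.2
      split_ifs <;> omega
  · rw [udeg_of_mod_ne_zero hk hx]
    simp only [Nat.not_succ_le_self, false_iff, not_exists]
    intro j hj
    exact hx (hj ▸ Nat.mul_mod_right _ _)

theorem card_setOf_udeg_le_one (hk : 0 < k) (hi : 1 ≤ i) :
    Nat.card {x | (specialTree k i).udeg x ≤ 1} = i + 1 := by
  rw [setOf_udeg_le_one_eq_range hk hi, Nat.card_range_of_injective (leaf_injective hk),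
    Nat.card_fin]

theorem succ_or_succ_of_adj (hk : 0 < k) {x y : Fin (k * (2 * i - 1) + 1)}
    (h : (specialTree k i).Adj x y) (hx : x.1 % k ≠ 0) (hy : y.1 % k ≠ 0) :
    y.1 = x.1 + 1 ∨ x.1 = y.1 + 1 := by
  rcases (adj_iff hk).1 h with ⟨hy0, hxy⟩ | ⟨hx0, hyx⟩
  · exact .inl (eq_succ_of_parent_eq hy0 hxy hx)
  · exact .inr (eq_succ_of_parent_eq hx0 hyx hy)

theorem isBPVC_setOf_udeg_le_one (hk : 0 < k) (hi : 1 ≤ i) :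
    (specialTree k i).IsBPVC k {x | (specialTree k i).udeg x ≤ 1} := by
  refine ⟨fun _ h => h, fun p hp => ?_⟩
  by_contra! hcon
  obtain ⟨hbranch, hcover⟩ := hcon
  have hmod : ∀ j < k, (p j).1 % k ≠ 0 := fun j hj => by
    have hlt : (specialTree k i).udeg (p j) < 3 := hbranch j hj
    have hgt : 1 < (specialTree k i).udeg (p j) := not_le.1 (hcover j hj)
    exact (udeg_eq_two_iff hk hi _).1 (by omega)
  obtain ⟨j, hj, hdvd⟩ := Int.exists_dvd_of_nonbacktracking_unit_steps hk
    (p := fun j => ((p j).1 : ℤ))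
    (fun j hj => by
      rcases succ_or_succ_of_adj hk (hp.1 j hj) (hmod j (by omega)) (hmod (j + 1) hj) with h | h <;>
        simp only [h] <;> omega)
    (fun j hj h => by
      have := hp.2 (j + 2) j hj (by omega) (Fin.ext (by exact_mod_cast h))
      omega)
  exact hmod j hj (Nat.mod_eq_zero_of_dvd (Int.natCast_dvd_natCast.1 hdvd))

end SpecialTree

/-- The extremal tree `F_i` is a tree on exactly `k(2i-1)+1` vertices with exactly
`i+1` leaves, and its set of leaves is a branching `k`-path vertex cover of size
`i+1`. -/
theorem stmt14 (k i : ℕ) (hk : 2 ≤ k) (hi : 1 ≤ i) :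
    (specialTree k i).IsTree ∧
    Nat.card (Fin (k * (2 * i - 1) + 1)) = k * (2 * i - 1) + 1 ∧
    Nat.card {x | (specialTree k i).udeg x ≤ 1} = i + 1 ∧
    (specialTree k i).IsBPVC k {x | (specialTree k i).udeg x ≤ 1} ∧
    ({x | (specialTree k i).udeg x ≤ 1} : Set (Fin (k * (2 * i - 1) + 1))).ncard
      = i + 1 := by
  have hk0 : 0 < k := by omega
  have hcard := SpecialTree.card_setOf_udeg_le_one hk0 hi
  refine ⟨(SpecialTree.isParentMap hk0).isTree, Nat.card_fin _, hcard,
    SpecialTree.isBPVC_setOf_udeg_le_one hk0 hi, ?_⟩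
  rwa [← Nat.card_coe_set_eq]
end
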